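/- arXiv:2411.10094 — 10 statements merged into one kernel-verified Lean document; each statement's English description precedes it below -/
import Mathlib

section
/- Define the skew generalized von Neumann–Jordan constant on the unit sphere by C̃(ξ,ν,X) = sup { (‖ξx+νy‖^p + ‖νx−ξy‖^p) / (2^{p−1}(ξ^p+ν^p)) : x, y ∈ S_X }. Then for any Banach space X with dim X ≥ 1, ((ξ+ν)^p + |ν−ξ|^p) / (2^{p−1}(ξ^p+ν^p)) ≤ C̃(ξ,ν,X) ≤ (ξ+ν)^p / (2^{p−2}(ξ^p+ν^p)). -/
open Real

theorem stmt_1 {X : Type*} [NormedAddCommGroup X] [NormedSpace ℝ X] [CompleteSpace X]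
    (hX : ∃ x : X, ‖x‖ = 1) (ξ ν p : ℝ) (hξ : 0 < ξ) (hν : 0 < ν) (hp : 1 ≤ p) :
    ((ξ + ν) ^ p + |ν - ξ| ^ p) / (2 ^ (p - 1) * (ξ ^ p + ν ^ p)) ≤
      sSup {r : ℝ | ∃ x y : X, ‖x‖ = 1 ∧ ‖y‖ = 1 ∧
        r = (‖ξ • x + ν • y‖ ^ p + ‖ν • x - ξ • y‖ ^ p) / (2 ^ (p - 1) * (ξ ^ p + ν ^ p))} ∧
    sSup {r : ℝ | ∃ x y : X, ‖x‖ = 1 ∧ ‖y‖ = 1 ∧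
        r = (‖ξ • x + ν • y‖ ^ p + ‖ν • x - ξ • y‖ ^ p) / (2 ^ (p - 1) * (ξ ^ p + ν ^ p))} ≤
      (ξ + ν) ^ p / (2 ^ (p - 2) * (ξ ^ p + ν ^ p)) := by
  obtain ⟨u, hu⟩ := hX
  set E : ℝ := ξ ^ p + ν ^ p with hE
  have hEpos : 0 < E := by positivity
  set D : ℝ := 2 ^ (p - 1) * E with hD
  have hDpos : 0 < D := by positivity
  set S := {r : ℝ | ∃ x y : X, ‖x‖ = 1 ∧ ‖y‖ = 1 ∧
        r = (‖ξ • x + ν • y‖ ^ p + ‖ν • x - ξ • y‖ ^ p) / D} with hS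
  have hξν : 0 < ξ + ν := by linarith
  have hmem : ((ξ + ν) ^ p + |ν - ξ| ^ p) / D ∈ S := by
    refine ⟨u, u, hu, hu, ?_⟩
    have h1 : ξ • u + ν • u = (ξ + ν) • u := by rw [add_smul]
    have h2 : ν • u - ξ • u = (ν - ξ) • u := by rw [sub_smul]
    rw [h1, h2, norm_smul, norm_smul, hu, mul_one, mul_one, Real.norm_eq_abs,
      Real.norm_eq_abs, abs_of_pos hξν]
  have hB : ∀ r ∈ S, r ≤ (ξ + ν) ^ p / (2 ^ (p - 2) * E) := by
    rintro r ⟨x, y, hx, hy, rfl⟩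
    have ha : ‖ξ • x + ν • y‖ ≤ ξ + ν := by
      calc ‖ξ • x + ν • y‖ ≤ ‖ξ • x‖ + ‖ν • y‖ := norm_add_le _ _
        _ = ξ + ν := by
          rw [norm_smul, norm_smul, hx, hy, mul_one, mul_one, Real.norm_eq_abs,
            Real.norm_eq_abs, abs_of_pos hξ, abs_of_pos hν]
    have hb : ‖ν • x - ξ • y‖ ≤ ξ + ν := by
      calc ‖ν • x - ξ • y‖ ≤ ‖ν • x‖ + ‖ξ • y‖ := norm_sub_le _ _
        _ = ξ + ν := by
          rw [norm_smul, norm_smul, hx, hy, mul_one, mul_one, Real.norm_eq_abs,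
            Real.norm_eq_abs, abs_of_pos hξ, abs_of_pos hν]; ring
    have ha' : ‖ξ • x + ν • y‖ ^ p ≤ (ξ + ν) ^ p :=
      Real.rpow_le_rpow (norm_nonneg _) ha (by linarith)
    have hb' : ‖ν • x - ξ • y‖ ^ p ≤ (ξ + ν) ^ p :=
      Real.rpow_le_rpow (norm_nonneg _) hb (by linarith)
    have hkey : (ξ + ν) ^ p / (2 ^ (p - 2) * E) = 2 * (ξ + ν) ^ p / D := by
      have h2 : (2 : ℝ) ^ (p - 1) = 2 ^ (p - 2) * 2 := by
        rw [← Real.rpow_add_one (by norm_num : (2:ℝ) ≠ 0) (p - 2)]; ring_nf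
      rw [hD, h2]
      field_simp
    rw [hkey]
    exact (div_le_div_iff_of_pos_right hDpos).mpr (by linarith)
  refine ⟨le_csSup ⟨_, hB⟩ hmem, csSup_le ⟨_, hmem⟩ hB⟩
end

section
/- For X = ℝ² equipped with the ℓ¹ norm, the constant C̃(ξ,ν,X) = sup { (‖ξx+νy‖₁^p + ‖νx−ξy‖₁^p) / (2^{p−1}(ξ^p+ν^p)) : ‖x‖₁ = ‖y‖₁ = 1 } equals (ξ+ν)^p / (2^{p−2}(ξ^p+ν^p)). -/
open Real

theorem stmt_2 (ξ ν p : ℝ) (hξ : 0 < ξ) (hν : 0 < ν) (hp : 1 ≤ p) :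
    sSup {r : ℝ | ∃ x y : PiLp 1 (fun _ : Fin 2 => ℝ), ‖x‖ = 1 ∧ ‖y‖ = 1 ∧
        r = (‖ξ • x + ν • y‖ ^ p + ‖ν • x - ξ • y‖ ^ p) / (2 ^ (p - 1) * (ξ ^ p + ν ^ p))} =
      (ξ + ν) ^ p / (2 ^ (p - 2) * (ξ ^ p + ν ^ p)) := by
  have hξν : (0:ℝ) < ξ + ν := by linarith
  have hden : (0:ℝ) < ξ ^ p + ν ^ p := by positivity
  have h2 : (2:ℝ) ^ (p - 1) = 2 * 2 ^ (p - 2) := by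
    rw [show p - 1 = 1 + (p - 2) by ring, Real.rpow_add (by norm_num), Real.rpow_one]
  have key : (2 * (ξ + ν) ^ p) / (2 ^ (p - 1) * (ξ ^ p + ν ^ p))
      = (ξ + ν) ^ p / (2 ^ (p - 2) * (ξ ^ p + ν ^ p)) := by
    rw [h2, mul_assoc, mul_div_mul_left _ _ (two_ne_zero)]
  apply IsGreatest.csSup_eq
  constructor
  · -- membership via x = (1,0), y = (0,-1)
    refine ⟨(WithLp.equiv 1 (Fin 2 → ℝ)).symm ![1, 0], (WithLp.equiv 1 (Fin 2 → ℝ)).symm ![0, -1], ?_, ?_, ?_⟩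
    · simp [PiLp.norm_eq_of_L1, Fin.sum_univ_two]
    · simp [PiLp.norm_eq_of_L1, Fin.sum_univ_two]
    · rw [← key]
      congr 1
      have hA : ‖ξ • (WithLp.equiv 1 (Fin 2 → ℝ)).symm ![1, 0]
          + ν • (WithLp.equiv 1 (Fin 2 → ℝ)).symm ![0, -1]‖ = ξ + ν := by
        simp [PiLp.norm_eq_of_L1, Fin.sum_univ_two,
          abs_of_pos hξ, abs_of_pos hν]
      have hB : ‖ν • (WithLp.equiv 1 (Fin 2 → ℝ)).symm ![1, 0]
          - ξ • (WithLp.equiv 1 (Fin 2 → ℝ)).symm ![0, -1]‖ = ξ + ν := by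
        simp [PiLp.norm_eq_of_L1, Fin.sum_univ_two,
          abs_of_pos hξ, abs_of_pos hν]
        ring
      rw [hA, hB]; ring
  · rintro r ⟨x, y, hx, hy, rfl⟩
    rw [← key]
    have hA : ‖ξ • x + ν • y‖ ≤ ξ + ν := by
      calc ‖ξ • x + ν • y‖ ≤ ‖ξ • x‖ + ‖ν • y‖ := norm_add_le _ _
        _ = ξ + ν := by rw [norm_smul, norm_smul, hx, hy]; simp [abs_of_pos hξ, abs_of_pos hν]
    have hB : ‖ν • x - ξ • y‖ ≤ ξ + ν := by
      calc ‖ν • x - ξ • y‖ ≤ ‖ν • x‖ + ‖ξ • y‖ := norm_sub_le _ _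
        _ = ξ + ν := by rw [norm_smul, norm_smul, hx, hy]; simp [abs_of_pos hξ, abs_of_pos hν]; ring
    have hAp : ‖ξ • x + ν • y‖ ^ p ≤ (ξ + ν) ^ p :=
      Real.rpow_le_rpow (norm_nonneg _) hA (by linarith)
    have hBp : ‖ν • x - ξ • y‖ ^ p ≤ (ξ + ν) ^ p :=
      Real.rpow_le_rpow (norm_nonneg _) hB (by linarith)
    have hD : (0:ℝ) < 2 ^ (p - 1) * (ξ ^ p + ν ^ p) := by positivity
    have : ‖ξ • x + ν • y‖ ^ p + ‖ν • x - ξ • y‖ ^ p ≤ 2 * (ξ + ν) ^ p := by linarith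
    exact (div_le_div_iff_of_pos_right hD).mpr this
end

section
/- For X = ℝ² equipped with the ℓ^∞ norm, the constant C̃(ξ,ν,X) = sup { (‖ξx+νy‖_∞^p + ‖νx−ξy‖_∞^p) / (2^{p−1}(ξ^p+ν^p)) : ‖x‖_∞ = ‖y‖_∞ = 1 } equals (ξ+ν)^p / (2^{p−2}(ξ^p+ν^p)). -/
open Real

lemma norm_pair (a b : ℝ) :
    ‖((WithLp.equiv ⊤ (Fin 2 → ℝ)).symm ![a, b])‖ = max |a| |b| := by
  rw [PiLp.norm_eq_ciSup]
  apply le_antisymm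
  · apply ciSup_le
    intro i
    fin_cases i <;> simp [le_max_left, le_max_right]
  · apply max_le
    · exact le_trans (by simp) (le_ciSup (Set.Finite.bddAbove (Set.finite_range _)) 0)
    · exact le_trans (by simp) (le_ciSup (Set.Finite.bddAbove (Set.finite_range _)) 1)

theorem stmt_3 (ξ ν p : ℝ) (hξ : 0 < ξ) (hν : 0 < ν) (hp : 1 ≤ p) :
    sSup {r : ℝ | ∃ x y : PiLp ⊤ (fun _ : Fin 2 => ℝ), ‖x‖ = 1 ∧ ‖y‖ = 1 ∧
        r = (‖ξ • x + ν • y‖ ^ p + ‖ν • x - ξ • y‖ ^ p) / (2 ^ (p - 1) * (ξ ^ p + ν ^ p))} =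
      (ξ + ν) ^ p / (2 ^ (p - 2) * (ξ ^ p + ν ^ p)) := by
  have hK : (0:ℝ) < ξ ^ p + ν ^ p := by positivity
  have hpow : (2:ℝ) ^ (p - 1) = 2 ^ (p - 2) * 2 := by
    rw [show p - 1 = (p - 2) + 1 by ring, Real.rpow_add two_pos, Real.rpow_one]
  have hval : 2 * (ξ + ν) ^ p / (2 ^ (p - 1) * (ξ ^ p + ν ^ p)) =
      (ξ + ν) ^ p / (2 ^ (p - 2) * (ξ ^ p + ν ^ p)) := by
    rw [hpow]
    have h2 : (0:ℝ) < (2:ℝ) ^ (p - 2) := Real.rpow_pos_of_pos two_pos _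
    field_simp
  have hub : ∀ r ∈ {r : ℝ | ∃ x y : PiLp ⊤ (fun _ : Fin 2 => ℝ), ‖x‖ = 1 ∧ ‖y‖ = 1 ∧
        r = (‖ξ • x + ν • y‖ ^ p + ‖ν • x - ξ • y‖ ^ p) / (2 ^ (p - 1) * (ξ ^ p + ν ^ p))},
      r ≤ (ξ + ν) ^ p / (2 ^ (p - 2) * (ξ ^ p + ν ^ p)) := by
    rintro r ⟨x, y, hx, hy, rfl⟩
    rw [← hval]
    apply div_le_div_of_nonneg_right ?_ (by positivity) |>.trans_eq rfl
    have hA : ‖ξ • x + ν • y‖ ≤ ξ + ν := by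
      calc ‖ξ • x + ν • y‖ ≤ ‖ξ • x‖ + ‖ν • y‖ := norm_add_le _ _
        _ = ξ + ν := by
          rw [norm_smul, norm_smul, hx, hy, Real.norm_eq_abs, Real.norm_eq_abs,
            abs_of_pos hξ, abs_of_pos hν]; ring
    have hB : ‖ν • x - ξ • y‖ ≤ ξ + ν := by
      calc ‖ν • x - ξ • y‖ ≤ ‖ν • x‖ + ‖ξ • y‖ := norm_sub_le _ _
        _ = ξ + ν := by
          rw [norm_smul, norm_smul, hx, hy, Real.norm_eq_abs, Real.norm_eq_abs,
            abs_of_pos hξ, abs_of_pos hν]; ring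
    have h1 : ‖ξ • x + ν • y‖ ^ p ≤ (ξ + ν) ^ p :=
      Real.rpow_le_rpow (norm_nonneg _) hA (by linarith)
    have h2 : ‖ν • x - ξ • y‖ ^ p ≤ (ξ + ν) ^ p :=
      Real.rpow_le_rpow (norm_nonneg _) hB (by linarith)
    linarith
  apply le_antisymm
  · apply csSup_le ?_ hub
    exact ⟨_, (WithLp.equiv ⊤ (Fin 2 → ℝ)).symm ![1, 1],
      (WithLp.equiv ⊤ (Fin 2 → ℝ)).symm ![1, -1],
      by rw [norm_pair]; norm_num, by rw [norm_pair]; norm_num, rfl⟩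
  · apply le_csSup ⟨_, hub⟩
    refine ⟨(WithLp.equiv ⊤ (Fin 2 → ℝ)).symm ![1, 1],
      (WithLp.equiv ⊤ (Fin 2 → ℝ)).symm ![1, -1],
      by rw [norm_pair]; norm_num, by rw [norm_pair]; norm_num, ?_⟩
    have e1 : ξ • (WithLp.equiv ⊤ (Fin 2 → ℝ)).symm ![1, 1] +
        ν • (WithLp.equiv ⊤ (Fin 2 → ℝ)).symm ![1, -1] =
        (WithLp.equiv ⊤ (Fin 2 → ℝ)).symm ![ξ + ν, ξ - ν] := by
      ext i; fin_cases i <;> simp <;> ring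
    have e2 : ν • (WithLp.equiv ⊤ (Fin 2 → ℝ)).symm ![1, 1] -
        ξ • (WithLp.equiv ⊤ (Fin 2 → ℝ)).symm ![1, -1] =
        (WithLp.equiv ⊤ (Fin 2 → ℝ)).symm ![ν - ξ, ν + ξ] := by
      ext i; fin_cases i <;> simp <;> ring
    have hmax1 : max |ξ + ν| |ξ - ν| = ξ + ν := by
      rw [abs_of_pos (by linarith : (0:ℝ) < ξ + ν)]
      exact max_eq_left (abs_le.mpr ⟨by linarith, by linarith⟩)
    have hmax2 : max |ν - ξ| |ν + ξ| = ξ + ν := by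
      rw [abs_of_pos (by linarith : (0:ℝ) < ν + ξ),
        max_eq_right (abs_le.mpr ⟨by linarith, by linarith⟩)]
      ring
    rw [e1, e2, norm_pair, norm_pair, hmax1, hmax2, ← hval]
    ring
end

section
/- Let C̃(ξ,ν,X) = sup_{x,y∈S_X} (‖ξx+νy‖^p + ‖νx−ξy‖^p)/(2^{p−1}(ξ^p+ν^p)) and C̃^{(p)}(X) = sup_{x,y∈S_X} (‖x+y‖^p + ‖x−y‖^p)/2^p. Then C̃(ξ,ν,X) ≥ (2·(min{ξ,ν})^p / (ξ^p+ν^p)) · C̃^{(p)}(X). -/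
open Real

private lemma jensen2' {p : ℝ} (hp : 1 ≤ p) {w a b : ℝ} (hw0 : 0 ≤ w) (hw1 : w ≤ 1)
    (ha : 0 ≤ a) (hb : 0 ≤ b) :
    (w * a + (1 - w) * b) ^ p ≤ w * a ^ p + (1 - w) * b ^ p := by
  have h := (convexOn_rpow hp).2 (Set.mem_Ici.2 ha) (Set.mem_Ici.2 hb) hw0
    (show (0:ℝ) ≤ 1 - w by linarith) (show w + (1 - w) = 1 by ring)
  simpa [smul_eq_mul] using h

private lemma F_ge_two' {X : Type*} [NormedAddCommGroup X] [NormedSpace ℝ X]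
    {p : ℝ} (hp : 1 ≤ p) (x y : X) (hx : ‖x‖ = 1) :
    2 ≤ ‖x + y‖ ^ p + ‖x - y‖ ^ p := by
  have hab : 2 ≤ ‖x + y‖ + ‖x - y‖ := by
    have h2 : ‖(x + y) + (x - y)‖ = 2 := by
      rw [show (x + y) + (x - y) = (2:ℝ) • x by module, norm_smul, hx]
      norm_num
    calc (2:ℝ) = ‖(x + y) + (x - y)‖ := h2.symm
      _ ≤ ‖x + y‖ + ‖x - y‖ := norm_add_le _ _
  have h1 : (1:ℝ) ≤ (1/2) * ‖x + y‖ + (1 - 1/2) * ‖x - y‖ := by linarith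
  have h2 : (1:ℝ) ≤ ((1/2) * ‖x + y‖ + (1 - 1/2) * ‖x - y‖) ^ p := by
    calc (1:ℝ) = 1 ^ p := (one_rpow p).symm
      _ ≤ _ := Real.rpow_le_rpow (by norm_num) h1 (by linarith)
  have h3 := jensen2' hp (by norm_num : (0:ℝ) ≤ 1/2) (by norm_num) (norm_nonneg (x+y))
    (norm_nonneg (x-y))
  linarith

private lemma key_ineq' {X : Type*} [NormedAddCommGroup X] [NormedSpace ℝ X]
    {p : ℝ} (hp : 1 ≤ p) (x y : X) (hx : ‖x‖ = 1) (hy : ‖y‖ = 1)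
    {s t : ℝ} (hs : 0 < s) (hst : s ≤ t) :
    s ^ p * (‖x + y‖ ^ p + ‖x - y‖ ^ p) ≤ ‖s • x + t • y‖ ^ p + ‖t • x - s • y‖ ^ p := by
  have ht : 0 < t := lt_of_lt_of_le hs hst
  set w : ℝ := s / t with hw
  have hw0 : 0 < w := div_pos hs ht
  have hw1 : w ≤ 1 := (div_le_one ht).2 hst
  set a : ℝ := ‖x + (t/s) • y‖ with ha
  set b : ℝ := ‖(t/s) • x - y‖ with hb
  have e1 : x + y = w • (x + (t/s) • y) + (1 - w) • x := by
    rw [smul_add, smul_smul, show w * (t/s) = 1 by rw [hw]; field_simp]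
    module
  have e2 : x - y = w • ((t/s) • x - y) + (1 - w) • (-y) := by
    rw [smul_sub, smul_smul, show w * (t/s) = 1 by rw [hw]; field_simp]
    module
  have h1 : ‖x + y‖ ≤ w * a + (1 - w) * 1 := by
    rw [e1]
    calc ‖w • (x + (t/s) • y) + (1 - w) • x‖
        ≤ ‖w • (x + (t/s) • y)‖ + ‖(1 - w) • x‖ := norm_add_le _ _
      _ = w * a + (1 - w) * 1 := by
          rw [norm_smul, norm_smul, hx, Real.norm_eq_abs, Real.norm_eq_abs,
            abs_of_nonneg hw0.le, abs_of_nonneg (by linarith : (0:ℝ) ≤ 1 - w)]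
  have h2 : ‖x - y‖ ≤ w * b + (1 - w) * 1 := by
    rw [e2]
    calc ‖w • ((t/s) • x - y) + (1 - w) • (-y)‖
        ≤ ‖w • ((t/s) • x - y)‖ + ‖(1 - w) • (-y)‖ := norm_add_le _ _
      _ = w * b + (1 - w) * 1 := by
          rw [norm_smul, norm_smul, norm_neg, hy, Real.norm_eq_abs, Real.norm_eq_abs,
            abs_of_nonneg hw0.le, abs_of_nonneg (by linarith : (0:ℝ) ≤ 1 - w)]
  have hpnn : 0 ≤ p := by linarith
  have ha0 : 0 ≤ a := norm_nonneg _
  have hb0 : 0 ≤ b := norm_nonneg _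
  have j1 : ‖x + y‖ ^ p ≤ w * a ^ p + (1 - w) * 1 := by
    calc ‖x + y‖ ^ p ≤ (w * a + (1 - w) * 1) ^ p :=
          Real.rpow_le_rpow (norm_nonneg _) h1 hpnn
      _ ≤ w * a ^ p + (1 - w) * 1 ^ p := jensen2' hp hw0.le hw1 ha0 zero_le_one
      _ = w * a ^ p + (1 - w) * 1 := by rw [one_rpow]
  have j2 : ‖x - y‖ ^ p ≤ w * b ^ p + (1 - w) * 1 := by
    calc ‖x - y‖ ^ p ≤ (w * b + (1 - w) * 1) ^ p :=
          Real.rpow_le_rpow (norm_nonneg _) h2 hpnn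
      _ ≤ w * b ^ p + (1 - w) * 1 ^ p := jensen2' hp hw0.le hw1 hb0 zero_le_one
      _ = w * b ^ p + (1 - w) * 1 := by rw [one_rpow]
  have hF2 : 2 ≤ ‖x + y‖ ^ p + ‖x - y‖ ^ p := F_ge_two' hp x y hx
  have hmain : ‖x + y‖ ^ p + ‖x - y‖ ^ p ≤ a ^ p + b ^ p := by
    nlinarith [hw0, hw1, hF2, j1, j2]
  have hsmul1 : ‖s • x + t • y‖ = s * a := by
    rw [show s • x + t • y = s • (x + (t/s) • y) by
      rw [smul_add, smul_smul, show s * (t/s) = t by field_simp]]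
    rw [norm_smul, Real.norm_eq_abs, abs_of_nonneg hs.le]
  have hsmul2 : ‖t • x - s • y‖ = s * b := by
    rw [show t • x - s • y = s • ((t/s) • x - y) by
      rw [smul_sub, smul_smul, show s * (t/s) = t by field_simp]]
    rw [norm_smul, Real.norm_eq_abs, abs_of_nonneg hs.le]
  rw [hsmul1, hsmul2, Real.mul_rpow hs.le ha0, Real.mul_rpow hs.le hb0]
  have hsp : 0 ≤ s ^ p := Real.rpow_nonneg hs.le p
  nlinarith [mul_le_mul_of_nonneg_left hmain hsp]

theorem stmt_6 {X : Type*} [NormedAddCommGroup X] [NormedSpace ℝ X] [CompleteSpace X]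
    (hX : ∃ x : X, ‖x‖ = 1) (ξ ν p : ℝ) (hξ : 0 < ξ) (hν : 0 < ν) (hp : 1 ≤ p) :
    sSup {r : ℝ | ∃ x y : X, ‖x‖ = 1 ∧ ‖y‖ = 1 ∧
        r = (‖ξ • x + ν • y‖ ^ p + ‖ν • x - ξ • y‖ ^ p) / (2 ^ (p - 1) * (ξ ^ p + ν ^ p))} ≥
      (2 * (min ξ ν) ^ p / (ξ ^ p + ν ^ p)) *
        sSup {r : ℝ | ∃ x y : X, ‖x‖ = 1 ∧ ‖y‖ = 1 ∧
          r = (‖x + y‖ ^ p + ‖x - y‖ ^ p) / 2 ^ p} := by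
  obtain ⟨x₀, hx₀⟩ := hX
  set A := {r : ℝ | ∃ x y : X, ‖x‖ = 1 ∧ ‖y‖ = 1 ∧
      r = (‖ξ • x + ν • y‖ ^ p + ‖ν • x - ξ • y‖ ^ p) / (2 ^ (p - 1) * (ξ ^ p + ν ^ p))} with hA
  set B := {r : ℝ | ∃ x y : X, ‖x‖ = 1 ∧ ‖y‖ = 1 ∧
      r = (‖x + y‖ ^ p + ‖x - y‖ ^ p) / 2 ^ p} with hB
  have hden : (0:ℝ) < 2 ^ (p - 1) * (ξ ^ p + ν ^ p) := by
    have h1 : (0:ℝ) < (2:ℝ) ^ (p - 1) := Real.rpow_pos_of_pos two_pos _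
    have h2 : (0:ℝ) < ξ ^ p := Real.rpow_pos_of_pos hξ _
    have h3 : (0:ℝ) < ν ^ p := Real.rpow_pos_of_pos hν _
    positivity
  set m := min ξ ν with hm
  have hm0 : 0 < m := lt_min hξ hν
  set c : ℝ := 2 * m ^ p / (ξ ^ p + ν ^ p) with hc
  have hsum : (0:ℝ) < ξ ^ p + ν ^ p := by
    have h2 : (0:ℝ) < ξ ^ p := Real.rpow_pos_of_pos hξ _
    have h3 : (0:ℝ) < ν ^ p := Real.rpow_pos_of_pos hν _
    linarith
  have hc0 : 0 < c := by
    have : (0:ℝ) < m ^ p := Real.rpow_pos_of_pos hm0 _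
    positivity
  have hAbdd : BddAbove A := by
    refine ⟨2 * (ξ + ν) ^ p / (2 ^ (p - 1) * (ξ ^ p + ν ^ p)), ?_⟩
    rintro r ⟨x, y, hx, hy, rfl⟩
    have hb1 : ‖ξ • x + ν • y‖ ≤ ξ + ν := by
      calc ‖ξ • x + ν • y‖ ≤ ‖ξ • x‖ + ‖ν • y‖ := norm_add_le _ _
        _ = ξ + ν := by
            rw [norm_smul, norm_smul, hx, hy, Real.norm_eq_abs, Real.norm_eq_abs,
              abs_of_pos hξ, abs_of_pos hν]; ring
    have hb2 : ‖ν • x - ξ • y‖ ≤ ξ + ν := by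
      calc ‖ν • x - ξ • y‖ ≤ ‖ν • x‖ + ‖ξ • y‖ := norm_sub_le _ _
        _ = ξ + ν := by
            rw [norm_smul, norm_smul, hx, hy, Real.norm_eq_abs, Real.norm_eq_abs,
              abs_of_pos hξ, abs_of_pos hν]; ring
    have hpnn : (0:ℝ) ≤ p := by linarith
    have h1 : ‖ξ • x + ν • y‖ ^ p ≤ (ξ + ν) ^ p :=
      Real.rpow_le_rpow (norm_nonneg _) hb1 hpnn
    have h2 : ‖ν • x - ξ • y‖ ^ p ≤ (ξ + ν) ^ p :=
      Real.rpow_le_rpow (norm_nonneg _) hb2 hpnn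
    gcongr
    linarith
  have hmemA : (‖ξ • x₀ + ν • x₀‖ ^ p + ‖ν • x₀ - ξ • x₀‖ ^ p) /
      (2 ^ (p - 1) * (ξ ^ p + ν ^ p)) ∈ A := ⟨x₀, x₀, hx₀, hx₀, rfl⟩
  have hsupA0 : 0 ≤ sSup A := by
    refine le_trans ?_ (le_csSup hAbdd hmemA)
    positivity
  have hkey : ∀ x y : X, ‖x‖ = 1 → ‖y‖ = 1 →
      m ^ p * (‖x + y‖ ^ p + ‖x - y‖ ^ p) ≤ ‖ξ • x + ν • y‖ ^ p + ‖ν • x - ξ • y‖ ^ p := by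
    intro x y hx hy
    rcases le_total ξ ν with h | h
    · rw [hm, min_eq_left h]
      exact key_ineq' hp x y hx hy hξ h
    · rw [hm, min_eq_right h]
      calc ν ^ p * (‖x + y‖ ^ p + ‖x - y‖ ^ p)
          = ν ^ p * (‖y + x‖ ^ p + ‖y - x‖ ^ p) := by
            rw [add_comm x y, norm_sub_rev x y]
        _ ≤ ‖ν • y + ξ • x‖ ^ p + ‖ξ • y - ν • x‖ ^ p := key_ineq' hp y x hy hx hν h
        _ = ‖ξ • x + ν • y‖ ^ p + ‖ν • x - ξ • y‖ ^ p := by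
            rw [add_comm (ν • y) (ξ • x), norm_sub_rev (ξ • y) (ν • x)]
  have h2p : (2:ℝ) ^ p = 2 ^ (p - 1) * 2 := by
    rw [← Real.rpow_add_one (by norm_num : (2:ℝ) ≠ 0) (p - 1), sub_add_cancel]
  have hBle : ∀ b ∈ B, b ≤ sSup A / c := by
    rintro b ⟨x, y, hx, hy, rfl⟩
    rw [le_div_iff₀ hc0, mul_comm]
    have hmemA' : (‖ξ • x + ν • y‖ ^ p + ‖ν • x - ξ • y‖ ^ p) /
        (2 ^ (p - 1) * (ξ ^ p + ν ^ p)) ∈ A := ⟨x, y, hx, hy, rfl⟩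
    refine le_trans ?_ (le_csSup hAbdd hmemA')
    have h2p1 : (0:ℝ) < (2:ℝ) ^ (p - 1) := Real.rpow_pos_of_pos two_pos _
    have eq1 : c * ((‖x + y‖ ^ p + ‖x - y‖ ^ p) / 2 ^ p) =
        (m ^ p * (‖x + y‖ ^ p + ‖x - y‖ ^ p)) / (2 ^ (p - 1) * (ξ ^ p + ν ^ p)) := by
      rw [hc, h2p]
      field_simp
    rw [eq1]
    gcongr
    exact hkey x y hx hy
  have hsupB : sSup B ≤ sSup A / c :=
    Real.sSup_le hBle (div_nonneg hsupA0 hc0.le)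
  rw [ge_iff_le]
  calc c * sSup B ≤ c * (sSup A / c) := mul_le_mul_of_nonneg_left hsupB hc0.le
    _ = sSup A := by field_simp
end

section
/- Let C̃(ξ,ν,X) be the skew generalized von Neumann–Jordan constant on the unit sphere and C̃^{(p)}(X) = sup_{x,y∈S_X} (‖x+y‖^p+‖x−y‖^p)/2^p. If C̃^{(p)}(X) = 2, then for all ξ, ν > 0, C̃(ξ,ν,X) = (ξ+ν)^p/(2^{p−2}(ξ^p+ν^p)). -/
open Real

/-- Arithmetic core: if `a^p + b^p` is almost `2^(p+1)` and `b^p ≤ 2^p`, then `a` is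
almost `2`. -/
lemma stmt_7_pow_extract (p δ a b : ℝ) (hp : 1 ≤ p) (hδ0 : 0 < δ) (hδ1 : δ < 1)
    (ha : 0 ≤ a) (hb : b ^ p ≤ 2 ^ p) (hsum : 2 ^ p * (2 - δ) < a ^ p + b ^ p) :
    2 - 2*δ < a := by
  have hp0 : (0:ℝ) < p := lt_of_lt_of_le one_pos hp
  have h1δ : (0:ℝ) < 1 - δ := by linarith
  have key : ((2:ℝ) - 2*δ) ^ p < a ^ p := by
    have h2 : ((2:ℝ) - 2*δ) = 2 * (1 - δ) := by ring
    have hmono : (1 - δ) ^ p ≤ (1 - δ) ^ (1:ℝ) :=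
      Real.rpow_le_rpow_of_exponent_ge h1δ (by linarith) hp
    rw [Real.rpow_one] at hmono
    have : ((2:ℝ) - 2*δ) ^ p ≤ 2 ^ p * (1 - δ) := by
      rw [h2, Real.mul_rpow (by norm_num) h1δ.le]
      have h2p : (0:ℝ) < 2 ^ p := Real.rpow_pos_of_pos two_pos p
      nlinarith
    calc ((2:ℝ) - 2*δ) ^ p ≤ 2 ^ p * (1 - δ) := this
      _ < a ^ p := by nlinarith
  by_contra hcon
  push_neg at hcon
  exact absurd (Real.rpow_le_rpow (by linarith) hcon hp0.le) (not_le.mpr key)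

/-- From the hypothesis that the p-James-type constant equals 2, extract almost-optimal
unit vectors. -/
lemma stmt_7_aux {X : Type*} [NormedAddCommGroup X] [NormedSpace ℝ X]
    (p : ℝ) (hp : 1 ≤ p)
    (h : sSup {r : ℝ | ∃ x y : X, ‖x‖ = 1 ∧ ‖y‖ = 1 ∧
        r = (‖x + y‖ ^ p + ‖x - y‖ ^ p) / 2 ^ p} = 2)
    (δ : ℝ) (hδ0 : 0 < δ) (hδ1 : δ < 1) :
    ∃ x y : X, ‖x‖ = 1 ∧ ‖y‖ = 1 ∧ 2 - 2*δ < ‖x + y‖ ∧ 2 - 2*δ < ‖x - y‖ := by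
  have hp0 : 0 < p := lt_of_lt_of_le one_pos hp
  set S : Set ℝ := {r : ℝ | ∃ x y : X, ‖x‖ = 1 ∧ ‖y‖ = 1 ∧
      r = (‖x + y‖ ^ p + ‖x - y‖ ^ p) / 2 ^ p} with hS
  have hne : S.Nonempty := by
    by_contra hc
    rw [Set.not_nonempty_iff_eq_empty] at hc
    rw [hc, Real.sSup_empty] at h
    norm_num at h
  have hlt : 2 - δ < sSup S := by rw [h]; linarith
  obtain ⟨r, hrS, hr⟩ := exists_lt_of_lt_csSup hne hlt
  obtain ⟨x, y, hx, hy, rfl⟩ := hrS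
  have h2p : (0:ℝ) < 2 ^ p := Real.rpow_pos_of_pos two_pos p
  rw [lt_div_iff₀ h2p] at hr
  have ha2 : ‖x + y‖ ≤ 2 := by
    calc ‖x + y‖ ≤ ‖x‖ + ‖y‖ := norm_add_le _ _
      _ = 2 := by rw [hx, hy]; norm_num
  have hb2 : ‖x - y‖ ≤ 2 := by
    calc ‖x - y‖ ≤ ‖x‖ + ‖y‖ := norm_sub_le _ _
      _ = 2 := by rw [hx, hy]; norm_num
  have hap : ‖x + y‖ ^ p ≤ 2 ^ p := Real.rpow_le_rpow (norm_nonneg _) ha2 hp0.le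
  have hbp : ‖x - y‖ ^ p ≤ 2 ^ p := Real.rpow_le_rpow (norm_nonneg _) hb2 hp0.le
  refine ⟨x, y, hx, hy, ?_, ?_⟩
  · exact stmt_7_pow_extract p δ _ _ hp hδ0 hδ1 (norm_nonneg _) hbp (by linarith)
  · refine stmt_7_pow_extract p δ _ _ hp hδ0 hδ1 (norm_nonneg _) hap ?_
    linarith

theorem stmt_7 {X : Type*} [NormedAddCommGroup X] [NormedSpace ℝ X] [CompleteSpace X]
    (p : ℝ) (hp : 1 ≤ p)
    (h : sSup {r : ℝ | ∃ x y : X, ‖x‖ = 1 ∧ ‖y‖ = 1 ∧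
        r = (‖x + y‖ ^ p + ‖x - y‖ ^ p) / 2 ^ p} = 2) :
    ∀ ξ ν : ℝ, 0 < ξ → 0 < ν →
      sSup {r : ℝ | ∃ x y : X, ‖x‖ = 1 ∧ ‖y‖ = 1 ∧
        r = (‖ξ • x + ν • y‖ ^ p + ‖ν • x - ξ • y‖ ^ p) / (2 ^ (p - 1) * (ξ ^ p + ν ^ p))} =
      (ξ + ν) ^ p / (2 ^ (p - 2) * (ξ ^ p + ν ^ p)) := by
  intro ξ ν hξ hν
  have hp0 : (0:ℝ) < p := lt_of_lt_of_le one_pos hp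
  have hD : (0:ℝ) < ξ ^ p + ν ^ p :=
    add_pos (Real.rpow_pos_of_pos hξ p) (Real.rpow_pos_of_pos hν p)
  have h2p2 : (0:ℝ) < 2 ^ (p - 2) := Real.rpow_pos_of_pos two_pos _
  have h2p1 : (0:ℝ) < 2 ^ (p - 1) := Real.rpow_pos_of_pos two_pos _
  have hsplit : (2:ℝ) ^ (p - 1) = 2 ^ (p - 2) * 2 := by
    rw [show p - 1 = (p - 2) + 1 by ring, Real.rpow_add two_pos, Real.rpow_one]
  set T : ℝ := (ξ + ν) ^ p / (2 ^ (p - 2) * (ξ ^ p + ν ^ p)) with hT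
  have hT0 : 0 < T := div_pos (Real.rpow_pos_of_pos (by linarith) p) (mul_pos h2p2 hD)
  set S : Set ℝ := {r : ℝ | ∃ x y : X, ‖x‖ = 1 ∧ ‖y‖ = 1 ∧
      r = (‖ξ • x + ν • y‖ ^ p + ‖ν • x - ξ • y‖ ^ p)
        / (2 ^ (p - 1) * (ξ ^ p + ν ^ p))} with hSdef
  -- upper bound for S
  have hub : ∀ r ∈ S, r ≤ T := by
    rintro r ⟨x, y, hx, hy, rfl⟩
    have hA : ‖ξ • x + ν • y‖ ≤ ξ + ν := by
      calc ‖ξ • x + ν • y‖ ≤ ‖ξ • x‖ + ‖ν • y‖ := norm_add_le _ _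
        _ = ξ + ν := by
            rw [norm_smul, norm_smul, hx, hy, Real.norm_eq_abs, Real.norm_eq_abs,
              abs_of_pos hξ, abs_of_pos hν]; ring
    have hB : ‖ν • x - ξ • y‖ ≤ ξ + ν := by
      calc ‖ν • x - ξ • y‖ ≤ ‖ν • x‖ + ‖ξ • y‖ := norm_sub_le _ _
        _ = ξ + ν := by
            rw [norm_smul, norm_smul, hx, hy, Real.norm_eq_abs, Real.norm_eq_abs,
              abs_of_pos hξ, abs_of_pos hν]; ring
    have hAp : ‖ξ • x + ν • y‖ ^ p ≤ (ξ + ν) ^ p :=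
      Real.rpow_le_rpow (norm_nonneg _) hA hp0.le
    have hBp : ‖ν • x - ξ • y‖ ^ p ≤ (ξ + ν) ^ p :=
      Real.rpow_le_rpow (norm_nonneg _) hB hp0.le
    calc (‖ξ • x + ν • y‖ ^ p + ‖ν • x - ξ • y‖ ^ p)
        / (2 ^ (p - 1) * (ξ ^ p + ν ^ p))
        ≤ ((ξ + ν) ^ p + (ξ + ν) ^ p) / (2 ^ (p - 1) * (ξ ^ p + ν ^ p)) := by
          gcongr
      _ = T := by
          rw [hT, hsplit]
          field_simp
          ring
  have hbdd : BddAbove S := ⟨T, hub⟩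
  -- S is nonempty
  obtain ⟨x0, y0, hx0, hy0, -, -⟩ := stmt_7_aux p hp h (1/2) (by norm_num) (by norm_num)
  have hne : S.Nonempty := ⟨_, ⟨x0, y0, hx0, hy0, rfl⟩⟩
  refine le_antisymm (csSup_le hne hub) ?_
  refine le_of_forall_lt fun c hc => ?_
  -- choose an explicit δ
  set δ : ℝ := min ((T - c) / (4 * T * p)) (1/4) with hδdef
  have hδ0 : 0 < δ :=
    lt_min (div_pos (by linarith) (by positivity)) (by norm_num)
  have hδ14 : δ ≤ 1/4 := min_le_right _ _
  have hδ1 : δ < 1 := by linarith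
  have hδc : 2 * T * p * δ < T - c := by
    have h1 : δ ≤ (T - c) / (4 * T * p) := min_le_left _ _
    have h2 : 2 * T * p * δ ≤ 2 * T * p * ((T - c) / (4 * T * p)) := by
      have : (0:ℝ) < 2 * T * p := by positivity
      nlinarith
    have h3 : 2 * T * p * ((T - c) / (4 * T * p)) = (T - c) / 2 := by
      field_simp
      ring
    rw [h3] at h2
    linarith
  obtain ⟨x, y, hx, hy, hxy, hxy'⟩ := stmt_7_aux p hp h δ hδ0 hδ1
  -- norming functionals
  have hxy0 : x + y ≠ 0 := by
    intro hzero
    rw [hzero, norm_zero] at hxy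
    linarith
  have hxy0' : x - y ≠ 0 := by
    intro hzero
    rw [hzero, norm_zero] at hxy'
    linarith
  obtain ⟨f, hf1, hfval⟩ := exists_dual_vector ℝ (x + y) (norm_ne_zero_iff.mpr hxy0)
  obtain ⟨g, hg1, hgval⟩ := exists_dual_vector ℝ (x - y) (norm_ne_zero_iff.mpr hxy0')
  have hfb : ∀ z : X, f z ≤ ‖z‖ := by
    intro z
    calc f z ≤ |f z| := le_abs_self _
      _ = ‖f z‖ := (Real.norm_eq_abs _).symm
      _ ≤ ‖f‖ * ‖z‖ := f.le_opNorm z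
      _ = ‖z‖ := by rw [hf1, one_mul]
  have hgb : ∀ z : X, g z ≤ ‖z‖ := by
    intro z
    calc g z ≤ |g z| := le_abs_self _
      _ = ‖g z‖ := (Real.norm_eq_abs _).symm
      _ ≤ ‖g‖ * ‖z‖ := g.le_opNorm z
      _ = ‖z‖ := by rw [hg1, one_mul]
  have hfadd : f x + f y = ‖x + y‖ := by
    have := hfval; rw [map_add] at this; exact_mod_cast this
  have hgsub : g x - g y = ‖x - y‖ := by
    have := hgval; rw [map_sub] at this; exact_mod_cast this
  have hfx : 1 - 2*δ < f x := by
    have := hfb y; rw [hy] at this; linarith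
  have hfy : 1 - 2*δ < f y := by
    have := hfb x; rw [hx] at this; linarith
  have hgx : 1 - 2*δ < g x := by
    have := hgb (-y); rw [norm_neg, hy, map_neg] at this; linarith
  have hgy : 1 - 2*δ < - g y := by
    have := hgb x; rw [hx] at this; linarith
  have h1δ : (0:ℝ) ≤ 1 - 2*δ := by linarith
  -- lower bounds on the two norms
  have hA : (ξ + ν) * (1 - 2*δ) ≤ ‖ξ • x + ν • y‖ := by
    have h1 : f (ξ • x + ν • y) = ξ * f x + ν * f y := by
      rw [map_add, map_smul, map_smul, smul_eq_mul, smul_eq_mul]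
    have h2 : f (ξ • x + ν • y) ≤ ‖ξ • x + ν • y‖ := hfb _
    have h3 : ξ * (1 - 2*δ) ≤ ξ * f x := mul_le_mul_of_nonneg_left hfx.le hξ.le
    have h4 : ν * (1 - 2*δ) ≤ ν * f y := mul_le_mul_of_nonneg_left hfy.le hν.le
    have h5 : (ξ + ν) * (1 - 2*δ) = ξ * (1 - 2*δ) + ν * (1 - 2*δ) := by ring
    linarith
  have hB : (ξ + ν) * (1 - 2*δ) ≤ ‖ν • x - ξ • y‖ := by
    have h1 : g (ν • x - ξ • y) = ν * g x - ξ * g y := by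
      rw [map_sub, map_smul, map_smul, smul_eq_mul, smul_eq_mul]
    have h2 : g (ν • x - ξ • y) ≤ ‖ν • x - ξ • y‖ := hgb _
    have h3 : ν * (1 - 2*δ) ≤ ν * g x := mul_le_mul_of_nonneg_left hgx.le hν.le
    have h4 : ξ * (1 - 2*δ) ≤ ξ * (- g y) := mul_le_mul_of_nonneg_left hgy.le hξ.le
    have h5 : (ξ + ν) * (1 - 2*δ) = ν * (1 - 2*δ) + ξ * (1 - 2*δ) := by ring
    linarith
  -- the corresponding element of S
  set r : ℝ := (‖ξ • x + ν • y‖ ^ p + ‖ν • x - ξ • y‖ ^ p)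
      / (2 ^ (p - 1) * (ξ ^ p + ν ^ p)) with hrdef
  have hrS : r ∈ S := ⟨x, y, hx, hy, rfl⟩
  have hAp : ((ξ + ν) * (1 - 2*δ)) ^ p ≤ ‖ξ • x + ν • y‖ ^ p :=
    Real.rpow_le_rpow (by positivity) hA hp0.le
  have hBp : ((ξ + ν) * (1 - 2*δ)) ^ p ≤ ‖ν • x - ξ • y‖ ^ p :=
    Real.rpow_le_rpow (by positivity) hB hp0.le
  have hmulp : ((ξ + ν) * (1 - 2*δ)) ^ p = (ξ + ν) ^ p * (1 - 2*δ) ^ p :=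
    Real.mul_rpow (by linarith) h1δ
  have hTform : 2 * ((ξ + ν) ^ p * (1 - 2*δ) ^ p) / (2 ^ (p - 1) * (ξ ^ p + ν ^ p))
      = T * (1 - 2*δ) ^ p := by
    rw [hT, hsplit]
    field_simp
  have hbern : 1 - 2*p*δ ≤ (1 - 2*δ) ^ p := by
    have := one_add_mul_self_le_rpow_one_add (show (-1:ℝ) ≤ -(2*δ) by linarith) hp
    rw [show (1:ℝ) + -(2*δ) = 1 - 2*δ by ring] at this
    linarith [this]
  have hcr : c < r := by
    have hr1 : T * (1 - 2*δ) ^ p ≤ r := by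
      rw [hrdef, ← hTform]
      gcongr
      rw [← hmulp]
      linarith
    have hr2 : T * (1 - 2*p*δ) ≤ T * (1 - 2*δ) ^ p :=
      mul_le_mul_of_nonneg_left hbern hT0.le
    have hexp : T * (1 - 2*p*δ) = T - 2*T*p*δ := by ring
    linarith
  exact lt_of_lt_of_le hcr (le_csSup hbdd hrS)
end

section
/- Let X be a Banach space, 1 ≤ p < ∞, and suppose there exist ξ₀, ν₀ > 0 such that C̃(ξ₀,ν₀,X) = (ξ₀+ν₀)^p/(2^{p−2}(ξ₀^p+ν₀^p)). Then C̃^{(p)}(X) = 2, i.e., sup_{x,y∈S_X}(‖x+y‖^p+‖x−y‖^p)/2^p = 2. -/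
open Real

private lemma aux_smul_norm {X : Type*} [NormedAddCommGroup X] [NormedSpace ℝ X]
    (c d : ℝ) (hc : 0 < c) (hd : 0 < d) (x y : X) (hx : ‖x‖ = 1) (hy : ‖y‖ = 1) :
    ‖c • x + d • y‖ ≤ min c d * ‖x + y‖ + (c + d - 2 * min c d) := by
  set m := min c d with hm
  have hmc : m ≤ c := min_le_left c d
  have hmd : m ≤ d := min_le_right c d
  have hdecomp : c • x + d • y = m • (x + y) + ((c - m) • x + (d - m) • y) := by
    module
  calc ‖c • x + d • y‖ = ‖m • (x + y) + ((c - m) • x + (d - m) • y)‖ := by rw [hdecomp]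
    _ ≤ ‖m • (x + y)‖ + (‖(c - m) • x‖ + ‖(d - m) • y‖) := by
        refine (norm_add_le _ _).trans ?_
        gcongr
        exact norm_add_le _ _
    _ = m * ‖x + y‖ + ((c - m) + (d - m)) := by
        rw [norm_smul, norm_smul, norm_smul, hx, hy,
          Real.norm_of_nonneg (le_min hc.le hd.le),
          Real.norm_of_nonneg (by linarith), Real.norm_of_nonneg (by linarith)]
        ring
    _ = m * ‖x + y‖ + (c + d - 2 * m) := by ring

set_option maxHeartbeats 1000000 in
theorem stmt_8 {X : Type*} [NormedAddCommGroup X] [NormedSpace ℝ X] [CompleteSpace X]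
    (p : ℝ) (hp : 1 ≤ p)
    (h : ∃ ξ₀ ν₀ : ℝ, 0 < ξ₀ ∧ 0 < ν₀ ∧
      sSup {r : ℝ | ∃ x y : X, ‖x‖ = 1 ∧ ‖y‖ = 1 ∧
        r = (‖ξ₀ • x + ν₀ • y‖ ^ p + ‖ν₀ • x - ξ₀ • y‖ ^ p) /
          (2 ^ (p - 1) * (ξ₀ ^ p + ν₀ ^ p))} =
      (ξ₀ + ν₀) ^ p / (2 ^ (p - 2) * (ξ₀ ^ p + ν₀ ^ p))) :
    sSup {r : ℝ | ∃ x y : X, ‖x‖ = 1 ∧ ‖y‖ = 1 ∧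
      r = (‖x + y‖ ^ p + ‖x - y‖ ^ p) / 2 ^ p} = 2 := by
  obtain ⟨ξ, ν, hξ, hν, h⟩ := h
  have hp0 : (0:ℝ) < p := lt_of_lt_of_le one_pos hp
  set S₁ : Set ℝ := {r : ℝ | ∃ x y : X, ‖x‖ = 1 ∧ ‖y‖ = 1 ∧
      r = (‖ξ • x + ν • y‖ ^ p + ‖ν • x - ξ • y‖ ^ p) /
        (2 ^ (p - 1) * (ξ ^ p + ν ^ p))} with hS₁
  set T : Set ℝ := {r : ℝ | ∃ x y : X, ‖x‖ = 1 ∧ ‖y‖ = 1 ∧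
      r = (‖x + y‖ ^ p + ‖x - y‖ ^ p) / 2 ^ p} with hT
  set s : ℝ := ξ + ν with hs
  set D : ℝ := ξ ^ p + ν ^ p with hD
  set m : ℝ := min ξ ν with hm
  have hs0 : 0 < s := by positivity
  have hD0 : 0 < D := by
    have := Real.rpow_pos_of_pos hξ p
    have := Real.rpow_pos_of_pos hν p
    positivity
  have hm0 : 0 < m := lt_min hξ hν
  have hm2 : 2 * m ≤ s := by
    have h1 : m ≤ ξ := min_le_left ξ ν
    have h2 : m ≤ ν := min_le_right ξ ν
    simp only [hs]; linarith
  have hVpos : 0 < (ξ + ν) ^ p / (2 ^ (p - 2) * (ξ ^ p + ν ^ p)) := by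
    have h1 : (0:ℝ) < (ξ + ν) ^ p := Real.rpow_pos_of_pos hs0 p
    have h2 : (0:ℝ) < (2:ℝ) ^ (p - 2) := Real.rpow_pos_of_pos two_pos _
    positivity
  -- S₁ is nonempty
  have hS₁ne : S₁.Nonempty := by
    by_contra hne
    rw [Set.not_nonempty_iff_eq_empty] at hne
    rw [hne, Real.sSup_empty] at h
    exact absurd h.symm (ne_of_gt hVpos)
  -- hence there is a unit vector
  obtain ⟨r₀, x₀, y₀, hx₀, hy₀, hr₀⟩ := hS₁ne
  have hTne : T.Nonempty :=
    ⟨(‖x₀ + x₀‖ ^ p + ‖x₀ - x₀‖ ^ p) / 2 ^ p, x₀, x₀, hx₀, hx₀, rfl⟩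
  have h2p : (0:ℝ) < (2:ℝ) ^ p := Real.rpow_pos_of_pos two_pos p
  have hTbdd : ∀ t ∈ T, t ≤ 2 := by
    rintro t ⟨x, y, hx, hy, rfl⟩
    have h1 : ‖x + y‖ ^ p ≤ (2:ℝ) ^ p := by
      apply Real.rpow_le_rpow (norm_nonneg _) _ hp0.le
      calc ‖x + y‖ ≤ ‖x‖ + ‖y‖ := norm_add_le _ _
        _ = 2 := by rw [hx, hy]; norm_num
    have h2 : ‖x - y‖ ^ p ≤ (2:ℝ) ^ p := by
      apply Real.rpow_le_rpow (norm_nonneg _) _ hp0.le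
      calc ‖x - y‖ ≤ ‖x‖ + ‖y‖ := norm_sub_le _ _
        _ = 2 := by rw [hx, hy]; norm_num
    rw [div_le_iff₀ h2p]
    linarith
  have hTbdd' : BddAbove T := ⟨2, hTbdd⟩
  refine le_antisymm (csSup_le hTne hTbdd) ?_
  -- lower bound : 2 ≤ sSup T
  refine le_of_forall_pos_le_add ?_
  intro ε hε
  -- choose parameters
  set η : ℝ := min (ε / p) 1 with hη
  have hη0 : 0 < η := lt_min (div_pos hε hp0) one_pos
  have hη1 : η ≤ 1 := min_le_right _ _
  set δ : ℝ := min (m * η) (s / 2) with hδ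
  have hδ0 : 0 < δ := lt_min (mul_pos hm0 hη0) (by positivity)
  have hδs : δ < s := lt_of_le_of_lt (min_le_right _ _) (by linarith)
  set ε₂ : ℝ := s ^ p - (s - δ) ^ p with hε₂
  have hε₂0 : 0 < ε₂ := by
    have : (s - δ) ^ p < s ^ p :=
      Real.rpow_lt_rpow (by linarith) (by linarith) hp0
    linarith
  have hK0 : (0:ℝ) < 2 ^ (p - 1) * D := by
    have : (0:ℝ) < (2:ℝ) ^ (p - 1) := Real.rpow_pos_of_pos two_pos _
    positivity
  set c : ℝ := ε₂ / (2 ^ (p - 1) * D) with hc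
  have hc0 : 0 < c := div_pos hε₂0 hK0
  -- extract a near-optimal element of S₁
  have hlt : (ξ + ν) ^ p / (2 ^ (p - 2) * (ξ ^ p + ν ^ p)) - c < sSup S₁ := by
    rw [h]; linarith
  have hS₁ne2 : S₁.Nonempty := ⟨r₀, x₀, y₀, hx₀, hy₀, hr₀⟩
  obtain ⟨r, ⟨x, y, hx, hy, hr⟩, hrgt⟩ := exists_lt_of_lt_csSup hS₁ne2 hlt
  set A : ℝ := ‖ξ • x + ν • y‖ with hA
  set B : ℝ := ‖ν • x - ξ • y‖ with hB
  have hAs : A ≤ s := by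
    calc A ≤ ‖ξ • x‖ + ‖ν • y‖ := norm_add_le _ _
      _ = s := by
          rw [norm_smul, norm_smul, hx, hy, Real.norm_of_nonneg hξ.le,
            Real.norm_of_nonneg hν.le]; simp [hs]
  have hBs : B ≤ s := by
    calc B ≤ ‖ν • x‖ + ‖ξ • y‖ := norm_sub_le _ _
      _ = s := by
          rw [norm_smul, norm_smul, hx, hy, Real.norm_of_nonneg hξ.le,
            Real.norm_of_nonneg hν.le]; simp [hs]; ring
  have hApB : A ^ p + B ^ p > 2 * s ^ p - ε₂ := by
    have hVK : ((ξ + ν) ^ p / (2 ^ (p - 2) * (ξ ^ p + ν ^ p))) * (2 ^ (p - 1) * D) =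
        2 * s ^ p := by
      have h21 : (2:ℝ) ^ (p - 1) = 2 ^ (p - 2) * 2 := by
        rw [← Real.rpow_add_one (by norm_num : (2:ℝ) ≠ 0) (p - 2)]
        congr 1; ring
      have h2p2 : (0:ℝ) < (2:ℝ) ^ (p - 2) := Real.rpow_pos_of_pos two_pos _
      rw [h21]
      field_simp
      ring
    have := hrgt
    rw [hr] at this
    have h1 : ((ξ + ν) ^ p / (2 ^ (p - 2) * (ξ ^ p + ν ^ p)) - c) * (2 ^ (p - 1) * D) <
        (A ^ p + B ^ p) / (2 ^ (p - 1) * D) * (2 ^ (p - 1) * D) :=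
      (mul_lt_mul_iff_of_pos_right hK0).mpr this
    rw [div_mul_cancel₀ _ (ne_of_gt hK0), sub_mul, hVK, hc,
      div_mul_cancel₀ _ (ne_of_gt hK0)] at h1
    linarith
  have hBple : B ^ p ≤ s ^ p := Real.rpow_le_rpow (norm_nonneg _) hBs hp0.le
  have hAple : A ^ p ≤ s ^ p := Real.rpow_le_rpow (norm_nonneg _) hAs hp0.le
  have hAgt : s - δ < A := by
    by_contra hcon
    push_neg at hcon
    have : A ^ p ≤ (s - δ) ^ p := Real.rpow_le_rpow (norm_nonneg _) hcon hp0.le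
    have : A ^ p ≤ s ^ p - ε₂ := by rw [hε₂]; linarith
    linarith
  have hBgt : s - δ < B := by
    by_contra hcon
    push_neg at hcon
    have : B ^ p ≤ (s - δ) ^ p := Real.rpow_le_rpow (norm_nonneg _) hcon hp0.le
    have : B ^ p ≤ s ^ p - ε₂ := by rw [hε₂]; linarith
    linarith
  -- deduce ‖x + y‖ and ‖x - y‖ are close to 2
  have hδm : δ / m ≤ η := by
    rw [div_le_iff₀ hm0]
    calc δ ≤ m * η := min_le_left _ _
      _ = η * m := mul_comm _ _
  have hxy : 2 - η ≤ ‖x + y‖ := by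
    have hb1 : A ≤ m * ‖x + y‖ + (s - 2 * m) := by
      rw [hA, hm, hs]
      exact aux_smul_norm ξ ν hξ hν x y hx hy
    have h2 : 2 * m - δ < m * ‖x + y‖ := by linarith
    have hmd : (2 - δ / m) * m = 2 * m - δ := by field_simp
    have h4 : (2 - δ / m) * m < ‖x + y‖ * m := by rw [hmd]; linarith
    have h3 := ((mul_lt_mul_iff_of_pos_right hm0).mp h4).le
    linarith
  have hxy' : 2 - η ≤ ‖x - y‖ := by
    have haux := aux_smul_norm ν ξ hν hξ x (-y) hx (by rw [norm_neg, hy])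
    have heq : ν • x + ξ • (-y) = ν • x - ξ • y := by module
    have heq2 : x + -y = x - y := by abel
    rw [heq, heq2] at haux
    have hb1 : B ≤ m * ‖x - y‖ + (s - 2 * m) := by
      rw [hB, hm, hs]
      calc ‖ν • x - ξ • y‖ ≤ min ν ξ * ‖x - y‖ + (ν + ξ - 2 * min ν ξ) := haux
        _ = min ξ ν * ‖x - y‖ + (ξ + ν - 2 * min ξ ν) := by rw [min_comm]; ring
    have h2 : 2 * m - δ < m * ‖x - y‖ := by linarith
    have hmd : (2 - δ / m) * m = 2 * m - δ := by field_simp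
    have h4 : (2 - δ / m) * m < ‖x - y‖ * m := by rw [hmd]; linarith
    have h3 := ((mul_lt_mul_iff_of_pos_right hm0).mp h4).le
    linarith
  -- the corresponding element of T is ≥ 2 - ε
  have hηle : 0 ≤ 2 - η := by linarith
  have hpow : (2 - η) ^ p ≥ (1 - p * (η / 2)) * 2 ^ p := by
    have hb : (1 + p * (-(η / 2))) ≤ (1 + (-(η / 2))) ^ p :=
      one_add_mul_self_le_rpow_one_add (by linarith) hp
    have h1 : ((1 + (-(η / 2))) * 2) ^ p = (1 + (-(η / 2))) ^ p * 2 ^ p :=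
      Real.mul_rpow (by linarith) (by norm_num)
    have h2 : (1 + (-(η / 2))) * 2 = 2 - η := by ring
    rw [h2] at h1
    rw [h1]
    have hstep : (1 - p * (η / 2)) ≤ (1 + (-(η / 2))) ^ p := by linarith
    exact mul_le_mul_of_nonneg_right hstep h2p.le
  have hxyp : (2 - η) ^ p ≤ ‖x + y‖ ^ p := Real.rpow_le_rpow hηle hxy hp0.le
  have hxyp' : (2 - η) ^ p ≤ ‖x - y‖ ^ p := Real.rpow_le_rpow hηle hxy' hp0.le
  have htT : (‖x + y‖ ^ p + ‖x - y‖ ^ p) / 2 ^ p ∈ T := ⟨x, y, hx, hy, rfl⟩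
  have htge : 2 - ε ≤ (‖x + y‖ ^ p + ‖x - y‖ ^ p) / 2 ^ p := by
    have h1 : 2 * ((1 - p * (η / 2)) * 2 ^ p) ≤ ‖x + y‖ ^ p + ‖x - y‖ ^ p := by
      linarith [hpow, hxyp, hxyp']
    rw [le_div_iff₀ h2p]
    have hηε : p * η ≤ ε := by
      have hle : η ≤ ε / p := min_le_left _ _
      have := mul_le_mul_of_nonneg_left hle hp0.le
      have heq : p * (ε / p) = ε := by field_simp
      linarith
    have h2 : (2 - ε) * 2 ^ p ≤ (2 - p * η) * 2 ^ p :=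
      mul_le_mul_of_nonneg_right (by linarith) h2p.le
    have h3 : (2 - p * η) * 2 ^ p = 2 * ((1 - p * (η / 2)) * 2 ^ p) := by ring
    linarith
  have := le_csSup hTbdd' htT
  linarith
end

section
/- Let J(X) be the James constant and C̃(ξ,ν,X) the skew generalized von Neumann–Jordan constant on the unit sphere with exponent p ≥ 1. Then C̃(ξ,ν,X) ≤ 1 + (min{ξ,ν}·J(X) + |ξ−ν|)^p / (2^{p−1}(ξ^p+ν^p)). -/
open Real

lemma two_rpow_aux {a b p : ℝ} (ha : 0 ≤ a) (hb : 0 ≤ b) (hp : 1 ≤ p) :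
    (a + b) ^ p ≤ 2 ^ (p - 1) * (a ^ p + b ^ p) := by
  have h := NNReal.rpow_add_le_mul_rpow_add_rpow a.toNNReal b.toNNReal hp
  have := NNReal.coe_le_coe.2 h
  push_cast [NNReal.coe_rpow, Real.coe_toNNReal _ ha, Real.coe_toNNReal _ hb] at this
  exact this

theorem stmt_12 {X : Type*} [NormedAddCommGroup X] [NormedSpace ℝ X] [CompleteSpace X]
    (hdim : 2 ≤ Module.rank ℝ X) (ξ ν p : ℝ) (hξ : 0 < ξ) (hν : 0 < ν) (hp : 1 ≤ p) :
    sSup {r : ℝ | ∃ x y : X, ‖x‖ = 1 ∧ ‖y‖ = 1 ∧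
        r = (‖ξ • x + ν • y‖ ^ p + ‖ν • x - ξ • y‖ ^ p) / (2 ^ (p - 1) * (ξ ^ p + ν ^ p))} ≤
      1 + (min ξ ν * sSup {r : ℝ | ∃ x y : X, ‖x‖ = 1 ∧ ‖y‖ = 1 ∧
        r = min ‖x + y‖ ‖x - y‖} + |ξ - ν|) ^ p / (2 ^ (p - 1) * (ξ ^ p + ν ^ p)) := by
  have hnt : Nontrivial X := by
    rw [← rank_pos_iff_nontrivial (R := ℝ)]
    exact lt_of_lt_of_le (by norm_num) hdim
  set S : Set ℝ := {r : ℝ | ∃ x y : X, ‖x‖ = 1 ∧ ‖y‖ = 1 ∧ r = min ‖x + y‖ ‖x - y‖} with hSdef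
  set J : ℝ := sSup S with hJdef
  have hbdd : BddAbove S := by
    refine ⟨2, ?_⟩
    rintro r ⟨x, y, hx, hy, rfl⟩
    calc min ‖x + y‖ ‖x - y‖ ≤ ‖x + y‖ := min_le_left _ _
      _ ≤ ‖x‖ + ‖y‖ := norm_add_le _ _
      _ = 2 := by rw [hx, hy]; norm_num
  have hJ0 : 0 ≤ J := by
    obtain ⟨z, hz⟩ := exists_norm_eq X (zero_le_one)
    refine le_csSup hbdd ⟨z, z, hz, hz, ?_⟩
    rw [sub_self, norm_zero, min_eq_right (norm_nonneg _)]
  -- denominator positivity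
  have hD : (0:ℝ) < 2 ^ (p - 1) * (ξ ^ p + ν ^ p) := by positivity
  set E : ℝ := min ξ ν * J + |ξ - ν| with hEdef
  have hm0 : 0 ≤ min ξ ν := le_min hξ.le hν.le
  have hE0 : 0 ≤ E := add_nonneg (mul_nonneg hm0 hJ0) (abs_nonneg _)
  -- bounds on the skewed norms
  have hA : ∀ x y : X, ‖x‖ = 1 → ‖y‖ = 1 → ‖ξ • x + ν • y‖ ≤ min ξ ν * ‖x + y‖ + |ξ - ν| := by
    intro x y hx hy
    rcases le_total ξ ν with h | h
    · have e : ξ • x + ν • y = ξ • (x + y) + (ν - ξ) • y := by module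
      rw [e, min_eq_left h, abs_of_nonpos (sub_nonpos.2 h)]
      calc ‖ξ • (x + y) + (ν - ξ) • y‖ ≤ ‖ξ • (x + y)‖ + ‖(ν - ξ) • y‖ := norm_add_le _ _
        _ = ξ * ‖x + y‖ + (ν - ξ) := by
            rw [norm_smul, norm_smul, hy, Real.norm_of_nonneg hξ.le,
              Real.norm_of_nonneg (sub_nonneg.2 h), mul_one]
        _ = ξ * ‖x + y‖ + -(ξ - ν) := by ring
    · have e : ξ • x + ν • y = ν • (x + y) + (ξ - ν) • x := by module
      rw [e, min_eq_right h, abs_of_nonneg (sub_nonneg.2 h)]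
      calc ‖ν • (x + y) + (ξ - ν) • x‖ ≤ ‖ν • (x + y)‖ + ‖(ξ - ν) • x‖ := norm_add_le _ _
        _ = ν * ‖x + y‖ + (ξ - ν) := by
            rw [norm_smul, norm_smul, hx, Real.norm_of_nonneg hν.le,
              Real.norm_of_nonneg (sub_nonneg.2 h), mul_one]
  have hB : ∀ x y : X, ‖x‖ = 1 → ‖y‖ = 1 → ‖ν • x - ξ • y‖ ≤ min ξ ν * ‖x - y‖ + |ξ - ν| := by
    intro x y hx hy
    rcases le_total ξ ν with h | h
    · have e : ν • x - ξ • y = ξ • (x - y) + (ν - ξ) • x := by module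
      rw [e, min_eq_left h, abs_of_nonpos (sub_nonpos.2 h)]
      calc ‖ξ • (x - y) + (ν - ξ) • x‖ ≤ ‖ξ • (x - y)‖ + ‖(ν - ξ) • x‖ := norm_add_le _ _
        _ = ξ * ‖x - y‖ + (ν - ξ) := by
            rw [norm_smul, norm_smul, hx, Real.norm_of_nonneg hξ.le,
              Real.norm_of_nonneg (sub_nonneg.2 h), mul_one]
        _ = ξ * ‖x - y‖ + -(ξ - ν) := by ring
    · have e : ν • x - ξ • y = ν • (x - y) - (ξ - ν) • y := by module
      rw [e, min_eq_right h, abs_of_nonneg (sub_nonneg.2 h)]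
      calc ‖ν • (x - y) - (ξ - ν) • y‖ ≤ ‖ν • (x - y)‖ + ‖(ξ - ν) • y‖ := norm_sub_le _ _
        _ = ν * ‖x - y‖ + (ξ - ν) := by
            rw [norm_smul, norm_smul, hy, Real.norm_of_nonneg hν.le,
              Real.norm_of_nonneg (sub_nonneg.2 h), mul_one]
  -- crude bounds
  have hsum : (ξ + ν) ^ p ≤ 2 ^ (p - 1) * (ξ ^ p + ν ^ p) := two_rpow_aux hξ.le hν.le hp
  have hA' : ∀ x y : X, ‖x‖ = 1 → ‖y‖ = 1 → ‖ξ • x + ν • y‖ ≤ ξ + ν := by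
    intro x y hx hy
    calc ‖ξ • x + ν • y‖ ≤ ‖ξ • x‖ + ‖ν • y‖ := norm_add_le _ _
      _ = ξ + ν := by
          rw [norm_smul, norm_smul, hx, hy, Real.norm_of_nonneg hξ.le,
            Real.norm_of_nonneg hν.le, mul_one, mul_one]
  have hB' : ∀ x y : X, ‖x‖ = 1 → ‖y‖ = 1 → ‖ν • x - ξ • y‖ ≤ ξ + ν := by
    intro x y hx hy
    calc ‖ν • x - ξ • y‖ ≤ ‖ν • x‖ + ‖ξ • y‖ := norm_sub_le _ _
      _ = ξ + ν := by
          rw [norm_smul, norm_smul, hx, hy, Real.norm_of_nonneg hξ.le,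
            Real.norm_of_nonneg hν.le, mul_one, mul_one]; ring
  refine Real.sSup_le ?_ ?_
  · rintro r ⟨x, y, hx, hy, rfl⟩
    have key : ‖ξ • x + ν • y‖ ^ p + ‖ν • x - ξ • y‖ ^ p ≤
        2 ^ (p - 1) * (ξ ^ p + ν ^ p) + E ^ p := by
      rcases le_total ‖x + y‖ ‖x - y‖ with h | h
      · have hmem : ‖x + y‖ ∈ S := ⟨x, y, hx, hy, (min_eq_left h).symm⟩
        have hJle : ‖x + y‖ ≤ J := le_csSup hbdd hmem
        have h1 : ‖ξ • x + ν • y‖ ≤ E := by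
          refine (hA x y hx hy).trans ?_
          exact add_le_add_left (mul_le_mul_of_nonneg_left hJle hm0) _
        have h1p : ‖ξ • x + ν • y‖ ^ p ≤ E ^ p :=
          Real.rpow_le_rpow (norm_nonneg _) h1 (le_trans zero_le_one hp)
        have h2p : ‖ν • x - ξ • y‖ ^ p ≤ 2 ^ (p - 1) * (ξ ^ p + ν ^ p) :=
          le_trans (Real.rpow_le_rpow (norm_nonneg _) (hB' x y hx hy)
            (le_trans zero_le_one hp)) hsum
        linarith
      · have hmem : ‖x - y‖ ∈ S := ⟨x, y, hx, hy, (min_eq_right h).symm⟩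
        have hJle : ‖x - y‖ ≤ J := le_csSup hbdd hmem
        have h1 : ‖ν • x - ξ • y‖ ≤ E := by
          refine (hB x y hx hy).trans ?_
          exact add_le_add_left (mul_le_mul_of_nonneg_left hJle hm0) _
        have h1p : ‖ν • x - ξ • y‖ ^ p ≤ E ^ p :=
          Real.rpow_le_rpow (norm_nonneg _) h1 (le_trans zero_le_one hp)
        have h2p : ‖ξ • x + ν • y‖ ^ p ≤ 2 ^ (p - 1) * (ξ ^ p + ν ^ p) :=
          le_trans (Real.rpow_le_rpow (norm_nonneg _) (hA' x y hx hy)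
            (le_trans zero_le_one hp)) hsum
        linarith
    rw [div_le_iff₀ hD]
    have : (1 + E ^ p / (2 ^ (p - 1) * (ξ ^ p + ν ^ p))) * (2 ^ (p - 1) * (ξ ^ p + ν ^ p)) =
        2 ^ (p - 1) * (ξ ^ p + ν ^ p) + E ^ p := by
      field_simp
    rw [this]
    exact key
  · positivity
end

section
/- Let X be a Banach space with modulus of convexity δ_X(ε) = inf { 1 − ‖x+y‖/2 : x, y ∈ S_X, ‖x−y‖ ≥ ε }. Then for ξ, ν > 0 and p ≥ 1, C̃(ξ,ν,X) ≤ sup_{ε∈[0,2]} ([2·min{ξ,ν}(1−δ_X(ε)) + |ξ−ν|]^p + [min{ξ,ν}·ε + |ξ−ν|]^p) / (2^{p−1}(ξ^p+ν^p)). -/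
open Real

lemma aux_norm_bounds {X : Type*} [NormedAddCommGroup X] [NormedSpace ℝ X]
    (ξ ν : ℝ) (hξ0 : 0 ≤ ξ) (hν0 : 0 ≤ ν) (x y : X) (hx : ‖x‖ = 1) (hy : ‖y‖ = 1) :
    ‖ξ • x + ν • y‖ ≤ min ξ ν * ‖x + y‖ + |ξ - ν| ∧
    ‖ν • x - ξ • y‖ ≤ min ξ ν * ‖x - y‖ + |ξ - ν| := by
  rcases le_total ξ ν with h | h
  · rw [min_eq_left h, abs_of_nonpos (by linarith), neg_sub]
    constructor
    · calc ‖ξ • x + ν • y‖ = ‖ξ • (x + y) + (ν - ξ) • y‖ := by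
            congr 1; module
        _ ≤ ‖ξ • (x + y)‖ + ‖(ν - ξ) • y‖ := norm_add_le _ _
        _ ≤ |ξ| * ‖x + y‖ + |ν - ξ| * ‖y‖ := by rw [norm_smul, norm_smul]; simp
        _ ≤ ξ * ‖x + y‖ + (ν - ξ) := by
            rw [hy, abs_of_nonneg (by linarith : (0:ℝ) ≤ ν - ξ)]
            rw [abs_of_nonneg hξ0]; linarith
    · calc ‖ν • x - ξ • y‖ = ‖ξ • (x - y) + (ν - ξ) • x‖ := by
            congr 1; module
        _ ≤ ‖ξ • (x - y)‖ + ‖(ν - ξ) • x‖ := norm_add_le _ _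
        _ ≤ |ξ| * ‖x - y‖ + |ν - ξ| * ‖x‖ := by rw [norm_smul, norm_smul]; simp
        _ ≤ ξ * ‖x - y‖ + (ν - ξ) := by
            rw [hx, abs_of_nonneg (by linarith : (0:ℝ) ≤ ν - ξ)]
            rw [abs_of_nonneg hξ0]; linarith
  · rw [min_eq_right h, abs_of_nonneg (by linarith)]
    constructor
    · calc ‖ξ • x + ν • y‖ = ‖ν • (x + y) + (ξ - ν) • x‖ := by
            congr 1; module
        _ ≤ ‖ν • (x + y)‖ + ‖(ξ - ν) • x‖ := norm_add_le _ _
        _ ≤ |ν| * ‖x + y‖ + |ξ - ν| * ‖x‖ := by rw [norm_smul, norm_smul]; simp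
        _ ≤ ν * ‖x + y‖ + (ξ - ν) := by
            rw [hx, abs_of_nonneg (by linarith : (0:ℝ) ≤ ξ - ν)]
            rw [abs_of_nonneg hν0]; linarith
    · calc ‖ν • x - ξ • y‖ = ‖ν • (x - y) + -((ξ - ν) • y)‖ := by
            congr 1; module
        _ ≤ ‖ν • (x - y)‖ + ‖-((ξ - ν) • y)‖ := norm_add_le _ _
        _ ≤ |ν| * ‖x - y‖ + |ξ - ν| * ‖y‖ := by
            rw [norm_neg, norm_smul, norm_smul]; simp
        _ ≤ ν * ‖x - y‖ + (ξ - ν) := by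
            rw [hy, abs_of_nonneg (by linarith : (0:ℝ) ≤ ξ - ν)]
            rw [abs_of_nonneg hν0]; linarith

theorem stmt_14 {X : Type*} [NormedAddCommGroup X] [NormedSpace ℝ X] [CompleteSpace X]
    (hdim : 2 ≤ Module.rank ℝ X) (ξ ν p : ℝ) (hξ : 0 < ξ) (hν : 0 < ν) (hp : 1 ≤ p)
    (δX : ℝ → ℝ)
    (hδ : ∀ ε : ℝ, δX ε = sInf {r : ℝ | ∃ x y : X, ‖x‖ = 1 ∧ ‖y‖ = 1 ∧ ε ≤ ‖x - y‖ ∧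
        r = 1 - ‖x + y‖ / 2}) :
    sSup {r : ℝ | ∃ x y : X, ‖x‖ = 1 ∧ ‖y‖ = 1 ∧
        r = (‖ξ • x + ν • y‖ ^ p + ‖ν • x - ξ • y‖ ^ p) / (2 ^ (p - 1) * (ξ ^ p + ν ^ p))} ≤
      sSup {r : ℝ | ∃ ε ∈ Set.Icc (0 : ℝ) 2,
        r = ((2 * min ξ ν * (1 - δX ε) + |ξ - ν|) ^ p + (min ξ ν * ε + |ξ - ν|) ^ p) /
          (2 ^ (p - 1) * (ξ ^ p + ν ^ p))} := by
  have hp0 : (0:ℝ) ≤ p := by linarith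
  have hm : 0 < min ξ ν := lt_min hξ hν
  have hd : (0:ℝ) ≤ |ξ - ν| := abs_nonneg _
  have hden : (0:ℝ) < 2 ^ (p - 1) * (ξ ^ p + ν ^ p) := by
    have h1 : (0:ℝ) < (2:ℝ) ^ (p - 1) := Real.rpow_pos_of_pos (by norm_num) _
    have h2 : (0:ℝ) < ξ ^ p := Real.rpow_pos_of_pos hξ _
    have h3 : (0:ℝ) < ν ^ p := Real.rpow_pos_of_pos hν _
    positivity
  -- a unit vector exists
  have : Nontrivial X := by
    rw [← rank_pos_iff_nontrivial (R := ℝ)]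
    exact lt_of_lt_of_le (by norm_num) hdim
  obtain ⟨z, hz⟩ : ∃ z : X, ‖z‖ = 1 := by
    obtain ⟨z, hz⟩ := NormedSpace.sphere_nonempty (E := X) (x := 0) (r := 1) |>.2 zero_le_one
    exact ⟨z, by simpa using hz⟩
  -- bounds on δX on [0,2]
  have hδ_mem : ∀ ε ∈ Set.Icc (0:ℝ) 2, 0 ≤ δX ε ∧
      ∀ x y : X, ‖x‖ = 1 → ‖y‖ = 1 → ε ≤ ‖x - y‖ → δX ε ≤ 1 - ‖x + y‖ / 2 := by
    intro ε hε
    have hbdd : BddBelow {r : ℝ | ∃ x y : X, ‖x‖ = 1 ∧ ‖y‖ = 1 ∧ ε ≤ ‖x - y‖ ∧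
        r = 1 - ‖x + y‖ / 2} := by
      refine ⟨0, ?_⟩
      rintro r ⟨x, y, hx, hy, _, rfl⟩
      have := norm_add_le x y
      rw [hx, hy] at this
      linarith
    constructor
    · rw [hδ ε]
      have hzz : ‖z - -z‖ = 2 := by
        rw [sub_neg_eq_add, ← two_smul ℝ z, norm_smul]
        simp [hz]
      refine le_csInf ⟨1 - ‖z + -z‖ / 2, z, -z, hz, by simpa using hz, ?_, rfl⟩ ?_
      · rw [hzz]; exact hε.2
      · rintro r ⟨x, y, hx, hy, _, rfl⟩
        have := norm_add_le x y
        rw [hx, hy] at this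
        linarith
    · intro x y hx hy hxy
      rw [hδ ε]
      exact csInf_le hbdd ⟨x, y, hx, hy, hxy, rfl⟩
  -- δX ε ≤ 1 on [0,2]
  have hδ_le_one : ∀ ε ∈ Set.Icc (0:ℝ) 2, δX ε ≤ 1 := by
    intro ε hε
    have hzz : ‖z - -z‖ = 2 := by
      rw [sub_neg_eq_add, ← two_smul ℝ z, norm_smul]
      simp [hz]
    have := (hδ_mem ε hε).2 z (-z) hz (by simpa using hz) (by rw [hzz]; exact hε.2)
    have h2 : (0:ℝ) ≤ ‖z + -z‖ / 2 := by positivity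
    linarith
  -- RHS is bounded above
  have hM : BddAbove {r : ℝ | ∃ ε ∈ Set.Icc (0 : ℝ) 2,
      r = ((2 * min ξ ν * (1 - δX ε) + |ξ - ν|) ^ p + (min ξ ν * ε + |ξ - ν|) ^ p) /
        (2 ^ (p - 1) * (ξ ^ p + ν ^ p))} := by
    refine ⟨2 * (2 * min ξ ν + |ξ - ν|) ^ p / (2 ^ (p - 1) * (ξ ^ p + ν ^ p)), ?_⟩
    rintro r ⟨ε, hε, rfl⟩
    have hδ0 := (hδ_mem ε hε).1
    have hδ1 := hδ_le_one ε hε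
    have h1 : (2 * min ξ ν * (1 - δX ε) + |ξ - ν|) ^ p ≤ (2 * min ξ ν + |ξ - ν|) ^ p := by
      apply Real.rpow_le_rpow (by nlinarith) (by nlinarith) hp0
    have h2 : (min ξ ν * ε + |ξ - ν|) ^ p ≤ (2 * min ξ ν + |ξ - ν|) ^ p := by
      apply Real.rpow_le_rpow (by nlinarith [hε.1]) (by nlinarith [hε.1, hε.2]) hp0
    exact (div_le_div_iff_of_pos_right hden).2 (by linarith)
  -- main argument
  apply csSup_le
  · exact ⟨_, z, z, hz, hz, rfl⟩
  rintro r ⟨x, y, hx, hy, rfl⟩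
  set ε := ‖x - y‖ with hεdef
  have hε_mem : ε ∈ Set.Icc (0:ℝ) 2 := by
    constructor
    · exact norm_nonneg _
    · have := norm_sub_le x y
      rw [hx, hy] at this
      linarith
  refine le_trans ?_ (le_csSup hM ⟨ε, hε_mem, rfl⟩)
  obtain ⟨hA, hB⟩ := aux_norm_bounds ξ ν hξ.le hν.le x y hx hy
  have hxy2 : ‖x + y‖ ≤ 2 * (1 - δX ε) := by
    have := (hδ_mem ε hε_mem).2 x y hx hy le_rfl
    linarith
  have h1 : ‖ξ • x + ν • y‖ ^ p ≤ (2 * min ξ ν * (1 - δX ε) + |ξ - ν|) ^ p := by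
    apply Real.rpow_le_rpow (norm_nonneg _) ?_ hp0
    calc ‖ξ • x + ν • y‖ ≤ min ξ ν * ‖x + y‖ + |ξ - ν| := hA
      _ ≤ min ξ ν * (2 * (1 - δX ε)) + |ξ - ν| := by nlinarith
      _ = 2 * min ξ ν * (1 - δX ε) + |ξ - ν| := by ring
  have h2 : ‖ν • x - ξ • y‖ ^ p ≤ (min ξ ν * ε + |ξ - ν|) ^ p :=
    Real.rpow_le_rpow (norm_nonneg _) hB hp0
  exact (div_le_div_iff_of_pos_right hden).2 (by linarith)
end

section
/- Let X be a Banach space, ξ, ν > 0, p ≥ 1, and suppose X is uniformly non-square, i.e., there exists δ ∈ (0,1) such that for all unit vectors x, y, either ‖x+y‖/2 ≤ 1−δ or ‖x−y‖/2 ≤ 1−δ. Then C̃(ξ,ν,X) < (ξ+ν)^p/(2^{p−2}(ξ^p+ν^p)). -/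
open Real

theorem stmt_16 {X : Type*} [NormedAddCommGroup X] [NormedSpace ℝ X] [CompleteSpace X]
    (ξ ν p : ℝ) (hξ : 0 < ξ) (hν : 0 < ν) (hp : 1 ≤ p)
    (h : ∃ δ : ℝ, δ ∈ Set.Ioo (0 : ℝ) 1 ∧ ∀ x y : X, ‖x‖ = 1 → ‖y‖ = 1 →
      ‖x + y‖ / 2 ≤ 1 - δ ∨ ‖x - y‖ / 2 ≤ 1 - δ) :
    sSup {r : ℝ | ∃ x y : X, ‖x‖ = 1 ∧ ‖y‖ = 1 ∧
        r = (‖ξ • x + ν • y‖ ^ p + ‖ν • x - ξ • y‖ ^ p) / (2 ^ (p - 1) * (ξ ^ p + ν ^ p))} <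
      (ξ + ν) ^ p / (2 ^ (p - 2) * (ξ ^ p + ν ^ p)) := by
  obtain ⟨δ, ⟨hδ0, hδ1⟩, hδ⟩ := h
  set m : ℝ := min ξ ν with hm
  have hm0 : 0 < m := lt_min hξ hν
  set A : ℝ := ξ + ν with hA
  set b : ℝ := ξ + ν - 2 * δ * m with hb
  have hmA : 2 * m ≤ A := by
    rcases min_le_iff.mpr (Or.inl (le_refl ξ)) with _
    have h1 : m ≤ ξ := min_le_left _ _
    have h2 : m ≤ ν := min_le_right _ _
    simp only [hA]; linarith
  have hb0 : 0 ≤ b := by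
    have : 2 * δ * m ≤ 2 * m := by nlinarith
    simp only [hb]; linarith
  have hbA : b < A := by
    have : 0 < 2 * δ * m := by positivity
    simp only [hb, hA]; linarith
  have hA0 : 0 < A := by positivity
  have hD0 : 0 < 2 ^ (p - 1) * (ξ ^ p + ν ^ p) := by
    have h1 : (0:ℝ) < (2:ℝ) ^ (p - 1) := Real.rpow_pos_of_pos (by norm_num) _
    have h2 : (0:ℝ) < ξ ^ p := Real.rpow_pos_of_pos hξ _
    have h3 : (0:ℝ) < ν ^ p := Real.rpow_pos_of_pos hν _
    positivity
  set D : ℝ := 2 ^ (p - 1) * (ξ ^ p + ν ^ p) with hD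
  set M : ℝ := (A ^ p + b ^ p) / D with hM
  have hp0 : (0:ℝ) < p := lt_of_lt_of_le one_pos hp
  have hM0 : 0 ≤ M := by
    have h1 : 0 ≤ A ^ p := Real.rpow_nonneg hA0.le _
    have h2 : 0 ≤ b ^ p := Real.rpow_nonneg hb0 _
    positivity
  -- main bound: every element of the set is ≤ M
  have key : ∀ r ∈ {r : ℝ | ∃ x y : X, ‖x‖ = 1 ∧ ‖y‖ = 1 ∧
        r = (‖ξ • x + ν • y‖ ^ p + ‖ν • x - ξ • y‖ ^ p) / (2 ^ (p - 1) * (ξ ^ p + ν ^ p))},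
      r ≤ M := by
    rintro r ⟨x, y, hx, hy, rfl⟩
    have hmx : m ≤ ξ := min_le_left _ _
    have hmy : m ≤ ν := min_le_right _ _
    have h1 : ‖ξ • x + ν • y‖ ≤ A := by
      calc ‖ξ • x + ν • y‖ ≤ ‖ξ • x‖ + ‖ν • y‖ := norm_add_le _ _
        _ = ξ + ν := by rw [norm_smul, norm_smul, hx, hy,
            Real.norm_of_nonneg hξ.le, Real.norm_of_nonneg hν.le]; ring
    have h2 : ‖ν • x - ξ • y‖ ≤ A := by
      calc ‖ν • x - ξ • y‖ ≤ ‖ν • x‖ + ‖ξ • y‖ := norm_sub_le _ _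
        _ = ξ + ν := by rw [norm_smul, norm_smul, hx, hy,
            Real.norm_of_nonneg hξ.le, Real.norm_of_nonneg hν.le]; ring
    have hnum : ‖ξ • x + ν • y‖ ^ p + ‖ν • x - ξ • y‖ ^ p ≤ A ^ p + b ^ p := by
      rcases hδ x y hx hy with hc | hc
      · -- ‖x+y‖ ≤ 2(1-δ), so ‖ξ•x+ν•y‖ ≤ b
        have hxy2 : ‖x + y‖ ≤ 2 * (1 - δ) := by linarith
        have hsmall : ‖ξ • x + ν • y‖ ≤ b := by
          have hid : ξ • x + ν • y = m • (x + y) + ((ξ - m) • x + (ν - m) • y) := by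
            module
          calc ‖ξ • x + ν • y‖
              ≤ ‖m • (x + y)‖ + (‖(ξ - m) • x‖ + ‖(ν - m) • y‖) := by
                rw [hid]; exact (norm_add_le _ _).trans (by gcongr; exact norm_add_le _ _)
            _ = m * ‖x + y‖ + ((ξ - m) + (ν - m)) := by
                rw [norm_smul, norm_smul, norm_smul, hx, hy,
                  Real.norm_of_nonneg hm0.le, Real.norm_of_nonneg (by linarith),
                  Real.norm_of_nonneg (by linarith)]; ring
            _ ≤ m * (2 * (1 - δ)) + ((ξ - m) + (ν - m)) := by
                gcongr
            _ = b := by simp only [hb]; ring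
        have e1 : ‖ξ • x + ν • y‖ ^ p ≤ b ^ p :=
          Real.rpow_le_rpow (norm_nonneg _) hsmall hp0.le
        have e2 : ‖ν • x - ξ • y‖ ^ p ≤ A ^ p :=
          Real.rpow_le_rpow (norm_nonneg _) h2 hp0.le
        linarith
      · -- ‖x-y‖ ≤ 2(1-δ), so ‖ν•x-ξ•y‖ ≤ b
        have hxy2 : ‖x - y‖ ≤ 2 * (1 - δ) := by linarith
        have hsmall : ‖ν • x - ξ • y‖ ≤ b := by
          have hid : ν • x - ξ • y = m • (x - y) + ((ν - m) • x - (ξ - m) • y) := by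
            module
          calc ‖ν • x - ξ • y‖
              ≤ ‖m • (x - y)‖ + (‖(ν - m) • x‖ + ‖(ξ - m) • y‖) := by
                rw [hid]; exact (norm_add_le _ _).trans (by gcongr; exact norm_sub_le _ _)
            _ = m * ‖x - y‖ + ((ν - m) + (ξ - m)) := by
                rw [norm_smul, norm_smul, norm_smul, hx, hy,
                  Real.norm_of_nonneg hm0.le, Real.norm_of_nonneg (by linarith),
                  Real.norm_of_nonneg (by linarith)]; ring
            _ ≤ m * (2 * (1 - δ)) + ((ν - m) + (ξ - m)) := by
                gcongr
            _ = b := by simp only [hb]; ring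
        have e1 : ‖ν • x - ξ • y‖ ^ p ≤ b ^ p :=
          Real.rpow_le_rpow (norm_nonneg _) hsmall hp0.le
        have e2 : ‖ξ • x + ν • y‖ ^ p ≤ A ^ p :=
          Real.rpow_le_rpow (norm_nonneg _) h1 hp0.le
        linarith
    exact div_le_div_of_nonneg_right hnum hD0.le
  have hsup : sSup {r : ℝ | ∃ x y : X, ‖x‖ = 1 ∧ ‖y‖ = 1 ∧
        r = (‖ξ • x + ν • y‖ ^ p + ‖ν • x - ξ • y‖ ^ p) / (2 ^ (p - 1) * (ξ ^ p + ν ^ p))} ≤ M :=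
    Real.sSup_le key hM0
  have htarget : (ξ + ν) ^ p / (2 ^ (p - 2) * (ξ ^ p + ν ^ p)) = (A ^ p + A ^ p) / D := by
    have h21 : (2:ℝ) ^ (p - 1) = 2 * 2 ^ (p - 2) := by
      rw [show p - 1 = 1 + (p - 2) by ring, Real.rpow_add (by norm_num), Real.rpow_one]
    have hpos : (0:ℝ) < (2:ℝ) ^ (p - 2) := Real.rpow_pos_of_pos (by norm_num) _
    have hpos2 : (0:ℝ) < ξ ^ p + ν ^ p := by
      have := Real.rpow_pos_of_pos hξ p; have := Real.rpow_pos_of_pos hν p; linarith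
    rw [hD, h21, hA]
    field_simp
    ring
  have hMlt : M < (A ^ p + A ^ p) / D := by
    apply div_lt_div_of_pos_right _ hD0
    have : b ^ p < A ^ p := Real.rpow_lt_rpow hb0 hbA hp0
    linarith
  rw [htarget]
  exact lt_of_le_of_lt hsup hMlt
end

section
/- Let X be a Banach space, ξ, ν > 0, p ≥ 1, and suppose C̃(ξ,ν,X) < (ξ+ν)^p/(2^{p−2}(ξ^p+ν^p)). Then X is uniformly non-square: there exists δ ∈ (0,1) such that for all x, y ∈ S_X, min(‖x+y‖, ‖x−y‖) ≤ 2(1−δ). -/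
open Real

private lemma aux_lower {X : Type*} [NormedAddCommGroup X] [NormedSpace ℝ X]
    (c d : ℝ) (x y : X) (hc : 0 < c) (hd : 0 < d) (hx : ‖x‖ = 1) (hy : ‖y‖ = 1) :
    max c d * ‖x + y‖ - |c - d| ≤ ‖c • x + d • y‖ := by
  rcases le_total c d with hcd | hcd
  · rw [max_eq_right hcd, abs_of_nonpos (by linarith)]
    have h1 : ‖d • (x + y)‖ - ‖(d - c) • x‖ ≤ ‖d • (x + y) - (d - c) • x‖ :=
      norm_sub_norm_le _ _
    have h2 : d • (x + y) - (d - c) • x = c • x + d • y := by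
      simp [smul_add, sub_smul]; abel
    rw [h2, norm_smul, norm_smul, Real.norm_eq_abs, Real.norm_eq_abs,
      abs_of_pos hd, abs_of_nonneg (by linarith : (0:ℝ) ≤ d - c)] at h1
    rw [hx] at h1; linarith
  · rw [max_eq_left hcd, abs_of_nonneg (by linarith)]
    have h1 : ‖c • (x + y)‖ - ‖(c - d) • y‖ ≤ ‖c • (x + y) - (c - d) • y‖ :=
      norm_sub_norm_le _ _
    have h2 : c • (x + y) - (c - d) • y = c • x + d • y := by
      simp [smul_add, sub_smul]; abel
    rw [h2, norm_smul, norm_smul, Real.norm_eq_abs, Real.norm_eq_abs,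
      abs_of_pos hc, abs_of_nonneg (by linarith : (0:ℝ) ≤ c - d)] at h1
    rw [hy] at h1; linarith

theorem stmt_17 {X : Type*} [NormedAddCommGroup X] [NormedSpace ℝ X] [CompleteSpace X]
    (ξ ν p : ℝ) (hξ : 0 < ξ) (hν : 0 < ν) (hp : 1 ≤ p)
    (h : sSup {r : ℝ | ∃ x y : X, ‖x‖ = 1 ∧ ‖y‖ = 1 ∧
        r = (‖ξ • x + ν • y‖ ^ p + ‖ν • x - ξ • y‖ ^ p) / (2 ^ (p - 1) * (ξ ^ p + ν ^ p))} <
      (ξ + ν) ^ p / (2 ^ (p - 2) * (ξ ^ p + ν ^ p))) :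
    ∃ δ : ℝ, δ ∈ Set.Ioo (0 : ℝ) 1 ∧ ∀ x y : X, ‖x‖ = 1 → ‖y‖ = 1 →
      min ‖x + y‖ ‖x - y‖ ≤ 2 * (1 - δ) := by
  set S : Set ℝ := {r : ℝ | ∃ x y : X, ‖x‖ = 1 ∧ ‖y‖ = 1 ∧
      r = (‖ξ • x + ν • y‖ ^ p + ‖ν • x - ξ • y‖ ^ p) / (2 ^ (p - 1) * (ξ ^ p + ν ^ p))}
    with hS_def
  set M : ℝ := sSup S with hM_def
  set D : ℝ := ξ ^ p + ν ^ p with hD_def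
  have hD : 0 < D := add_pos (rpow_pos_of_pos hξ p) (rpow_pos_of_pos hν p)
  have h2p : (0:ℝ) < 2 ^ (p - 2) := rpow_pos_of_pos two_pos _
  have hden : (0:ℝ) < 2 ^ (p - 1) * D := mul_pos (rpow_pos_of_pos two_pos _) hD
  set B : ℝ := (ξ + ν) ^ p / (2 ^ (p - 2) * D) with hB_def
  have hξν : (0:ℝ) < ξ + ν := by linarith
  have hB : 0 < B := div_pos (rpow_pos_of_pos hξν p) (mul_pos h2p hD)
  have hpow2 : (2:ℝ) ^ (p - 1) = 2 * 2 ^ (p - 2) := by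
    rw [show p - 1 = 1 + (p - 2) by ring, rpow_add two_pos, rpow_one]
  -- every element of S is at most B
  have hub : ∀ r ∈ S, r ≤ B := by
    rintro r ⟨x, y, hx, hy, rfl⟩
    have ha : ‖ξ • x + ν • y‖ ≤ ξ + ν := by
      calc ‖ξ • x + ν • y‖ ≤ ‖ξ • x‖ + ‖ν • y‖ := norm_add_le _ _
        _ = ξ + ν := by
          rw [norm_smul, norm_smul, Real.norm_eq_abs, Real.norm_eq_abs,
            abs_of_pos hξ, abs_of_pos hν, hx, hy]; ring
    have hb : ‖ν • x - ξ • y‖ ≤ ξ + ν := by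
      calc ‖ν • x - ξ • y‖ ≤ ‖ν • x‖ + ‖ξ • y‖ := norm_sub_le _ _
        _ = ξ + ν := by
          rw [norm_smul, norm_smul, Real.norm_eq_abs, Real.norm_eq_abs,
            abs_of_pos hξ, abs_of_pos hν, hx, hy]; ring
    have hap : ‖ξ • x + ν • y‖ ^ p ≤ (ξ + ν) ^ p :=
      rpow_le_rpow (norm_nonneg _) ha (by linarith)
    have hbp : ‖ν • x - ξ • y‖ ^ p ≤ (ξ + ν) ^ p :=
      rpow_le_rpow (norm_nonneg _) hb (by linarith)
    rw [hB_def, div_le_div_iff₀ hden (mul_pos h2p hD), hpow2]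
    nlinarith [mul_pos h2p hD, rpow_pos_of_pos hξν p]
  have hbdd : BddAbove S := ⟨B, fun r hr => hub r hr⟩
  have hMB : M < B := h
  have hM0B : max M 0 < B := max_lt hMB hB
  set t : ℝ := max M 0 / B with ht_def
  have ht0 : 0 ≤ t := div_nonneg (le_max_right _ _) hB.le
  have ht1 : t < 1 := (div_lt_one hB).mpr hM0B
  have hp0 : (0:ℝ) < p := by linarith
  set s : ℝ := t ^ (1 / p) with hs_def
  have hs0 : 0 ≤ s := rpow_nonneg ht0 _
  have hs1 : s < 1 := rpow_lt_one ht0 ht1 (by positivity)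
  have hsp : s ^ p = t := by
    show (t ^ (1 / p)) ^ p = t
    rw [← rpow_mul ht0, one_div, inv_mul_cancel₀ hp0.ne', rpow_one]
  refine ⟨(1 - s) / 4, ⟨by linarith, by linarith⟩, ?_⟩
  intro x y hx hy
  by_contra hcon
  push_neg at hcon
  rw [lt_min_iff] at hcon
  obtain ⟨h1, h2⟩ := hcon
  set δ : ℝ := (1 - s) / 4 with hδ_def
  have hδ0 : 0 < δ := by rw [hδ_def]; linarith
  have hδhalf : δ ≤ 1 / 2 := by rw [hδ_def]; linarith
  have hc0 : 0 < (ξ + ν) * ((1 + s) / 2) := by positivity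
  have hmax : 0 < max ξ ν := lt_max_of_lt_left hξ
  have hmm : max ξ ν + min ξ ν = ξ + ν := max_add_min ξ ν
  have hmle : max ξ ν ≤ ξ + ν := by
    rcases le_total ξ ν with hh | hh
    · rw [max_eq_right hh]; linarith
    · rw [max_eq_left hh]; linarith
  have habs : |ξ - ν| = max ξ ν - min ξ ν := by
    rcases le_total ξ ν with hh | hh
    · rw [abs_of_nonpos (by linarith), max_eq_right hh, min_eq_left hh]; ring
    · rw [abs_of_nonneg (by linarith), max_eq_left hh, min_eq_right hh]
  have habs' : |ν - ξ| = max ξ ν - min ξ ν := by rw [abs_sub_comm]; exact habs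
  have ha : (ξ + ν) * ((1 + s) / 2) < ‖ξ • x + ν • y‖ := by
    have haux := aux_lower ξ ν x y hξ hν hx hy
    have hstep : max ξ ν * (2 * (1 - δ)) < max ξ ν * ‖x + y‖ :=
      (mul_lt_mul_iff_right₀ hmax).mpr h1
    have hmul2 : 2 * δ * max ξ ν ≤ 2 * δ * (ξ + ν) :=
      mul_le_mul_of_nonneg_left hmle (by linarith)
    have heq : (ξ + ν) * ((1 + s) / 2) = (ξ + ν) - 2 * δ * (ξ + ν) := by
      rw [hδ_def]; ring
    have hexp : max ξ ν * (2 * (1 - δ)) = 2 * max ξ ν - 2 * δ * max ξ ν := by ring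
    linarith
  have hb : (ξ + ν) * ((1 + s) / 2) < ‖ν • x - ξ • y‖ := by
    have haux := aux_lower ν ξ x (-y) hν hξ hx (by rw [norm_neg, hy])
    have heq3 : ν • x + ξ • (-y) = ν • x - ξ • y := by module
    rw [heq3, ← sub_eq_add_neg, max_comm ν ξ] at haux
    have hstep : max ξ ν * (2 * (1 - δ)) < max ξ ν * ‖x - y‖ :=
      (mul_lt_mul_iff_right₀ hmax).mpr h2
    have hmul2 : 2 * δ * max ξ ν ≤ 2 * δ * (ξ + ν) :=
      mul_le_mul_of_nonneg_left hmle (by linarith)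
    have heq : (ξ + ν) * ((1 + s) / 2) = (ξ + ν) - 2 * δ * (ξ + ν) := by
      rw [hδ_def]; ring
    have hexp : max ξ ν * (2 * (1 - δ)) = 2 * max ξ ν - 2 * δ * max ξ ν := by ring
    linarith
  have hap : ((ξ + ν) * ((1 + s) / 2)) ^ p < ‖ξ • x + ν • y‖ ^ p :=
    rpow_lt_rpow hc0.le ha hp0
  have hbp : ((ξ + ν) * ((1 + s) / 2)) ^ p < ‖ν • x - ξ • y‖ ^ p :=
    rpow_lt_rpow hc0.le hb hp0
  have hmul : ((ξ + ν) * ((1 + s) / 2)) ^ p = (ξ + ν) ^ p * ((1 + s) / 2) ^ p :=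
    mul_rpow hξν.le (by positivity)
  have hrM : (‖ξ • x + ν • y‖ ^ p + ‖ν • x - ξ • y‖ ^ p) / (2 ^ (p - 1) * D) ≤ M :=
    le_csSup hbdd ⟨x, y, hx, hy, rfl⟩
  have hBs : B * ((1 + s) / 2) ^ p ≤
      (‖ξ • x + ν • y‖ ^ p + ‖ν • x - ξ • y‖ ^ p) / (2 ^ (p - 1) * D) := by
    rw [hB_def, div_mul_eq_mul_div, div_le_div_iff₀ (mul_pos h2p hD) hden, hpow2]
    calc (ξ + ν) ^ p * ((1 + s) / 2) ^ p * (2 * 2 ^ (p - 2) * D)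
        = 2 * ((ξ + ν) * ((1 + s) / 2)) ^ p * (2 ^ (p - 2) * D) := by
          rw [hmul]; ring
      _ ≤ (‖ξ • x + ν • y‖ ^ p + ‖ν • x - ξ • y‖ ^ p) * (2 ^ (p - 2) * D) :=
          mul_le_mul_of_nonneg_right (by linarith) (mul_pos h2p hD).le
  have hcontra : M < B * ((1 + s) / 2) ^ p := by
    have hsp2 : s ^ p < ((1 + s) / 2) ^ p := rpow_lt_rpow hs0 (by linarith) hp0
    rw [hsp] at hsp2
    have hlt : max M 0 < B * ((1 + s) / 2) ^ p := by
      have := (mul_lt_mul_iff_right₀ hB).mpr hsp2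
      rw [ht_def] at this
      calc max M 0 = B * (max M 0 / B) := by field_simp
        _ < B * ((1 + s) / 2) ^ p := this
    exact lt_of_le_of_lt (le_max_left _ _) hlt
  linarith [hBs.trans hrM]
end
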